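/- arXiv:2210.10390 — 12 statements merged into one kernel-verified Lean document; each statement's English description precedes it below -/
import Mathlib

section
/- Let q be an odd prime power with q ≡ 3 (mod 4), and let χ be the quadratic character of F_q. Then ∑_{x ∈ F_q} χ(x(x²-1)(x²+4x-1)) = 0. -/
theorem stmt_1 (F : Type*) [Field F] [Fintype F] [DecidableEq F]
    (hq3 : Fintype.card F % 4 = 3) :
    ∑ x : F, quadraticChar F (x * (x ^ 2 - 1) * (x ^ 2 + 4 * x - 1)) = 0 := by
  have hneg1 : quadraticChar F (-1) = -1 :=
    quadraticChar_neg_one_iff_not_isSquare.mpr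
      ((FiniteField.isSquare_neg_one_iff).not.mpr (by omega))
  apply Finset.sum_ninvolution (fun x => -x⁻¹)
  · intro a
    rcases eq_or_ne a 0 with rfl | ha
    · simp
    · have key : (-a⁻¹) * ((-a⁻¹) ^ 2 - 1) * ((-a⁻¹) ^ 2 + 4 * (-a⁻¹) - 1)
          = ((a⁻¹) ^ 3) ^ 2 * (-1 * (a * (a ^ 2 - 1) * (a ^ 2 + 4 * a - 1))) := by
        field_simp
        ring
      rw [key]
      simp only [map_mul]
      rw [quadraticChar_sq_one' (pow_ne_zero _ (inv_ne_zero ha)), hneg1]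
      ring
  · intro a ha
    have ha0 : a ≠ 0 := by
      rintro rfl
      simp at ha
    intro h
    have : IsSquare (-1 : F) := by
      refine ⟨a, ?_⟩
      field_simp at h
      linear_combination h
    exact (FiniteField.isSquare_neg_one_iff).mp this |>.elim (by omega)
  · intro a; exact Finset.mem_univ _
  · intro a
    rcases eq_or_ne a 0 with rfl | ha
    · simp
    · field_simp
end

section
/- Let q be an odd prime power with q ≡ 3 (mod 4), and let χ be the quadratic character of F_q. Then ∑_{x ∈ F_q} χ((x²-1)(x²+4x-1)) = (∑_{x ∈ F_q} χ(x(x²-2x+5))) - 1. -/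
/-!
The substitution `u = (x + 1) / (x - 1)`, an involution of `F ∖ {1}`, turns the quartic
`(x² - 1)(x² + 4x - 1)` into `u(u² + u - 1)` times the square `(x - 1)⁴`; the point `x = 1`
contributes `0` on the left but `u = 1` contributes `1` on the right, whence the `- 1`.
Next, every `x ≠ 0` is the root of exactly one quadratic `x² - tx - 1`, namely for
`t = x - x⁻¹`, and then `x(x² + x - 1) = (t + 1)x²`. Counting the roots of `x² - tx - 1`
by `1 + χ(t² + 4)` and using `∑ χ(t + 1) = 0` gives `∑ χ(u(u² + u - 1)) = ∑ χ((t + 1)(t² + 4))`,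
which is the right-hand side after the shift `s = t + 1`.
-/

open Finset

section

variable {F : Type*} [Field F]

lemma cayley_ne_one (hF : ringChar F ≠ 2) {x : F} (hx : x ≠ 1) : (x + 1) / (x - 1) ≠ 1 := by
  rw [Ne, div_eq_one_iff_eq (sub_ne_zero.mpr hx)]
  intro h
  exact Ring.two_ne_zero hF (by linear_combination h)

lemma cayley_cayley (hF : ringChar F ≠ 2) {x : F} (hx : x ≠ 1) :
    ((x + 1) / (x - 1) + 1) / ((x + 1) / (x - 1) - 1) = x := by
  have h2 : (2 : F) ≠ 0 := Ring.two_ne_zero hF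
  have hx1 : x - 1 ≠ 0 := sub_ne_zero.mpr hx
  rw [div_add_one hx1, div_sub_one hx1, div_div_div_cancel_right₀ hx1,
    div_eq_iff (by ring_nf; exact h2)]
  ring

variable [Fintype F] [DecidableEq F]

lemma quadraticChar_mul_sq (a : F) {b : F} (hb : b ≠ 0) :
    quadraticChar F (a * b ^ 2) = quadraticChar F a := by
  rw [map_mul, quadraticChar_sq_one' hb, mul_one]

lemma sum_quadraticChar_add_const (hF : ringChar F ≠ 2) (a : F) :
    ∑ x : F, quadraticChar F (x + a) = 0 :=
  (Fintype.sum_equiv (Equiv.addRight a) _ _ fun _ => rfl).trans (quadraticChar_sum_zero hF)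

lemma card_roots_monic_quadratic (hF : ringChar F ≠ 2) (b c : F) :
    (#{x : F | x ^ 2 + b * x + c = 0} : ℤ) = quadraticChar F (b ^ 2 - 4 * c) + 1 := by
  have h2 : (2 : F) ≠ 0 := Ring.two_ne_zero hF
  have hcomplete : #{x : F | x ^ 2 + b * x + c = 0} = #{y : F | y ^ 2 = b ^ 2 - 4 * c}.toFinset := by
    rw [Set.toFinset_ofPred]
    refine card_nbij' (fun x => 2 * x + b) (fun y => (y - b) / 2) ?_ ?_ ?_ ?_
    · intro x hx
      simp only [coe_filter, mem_univ, true_and, Set.mem_ofPred_eq] at hx ⊢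
      linear_combination 4 * hx
    · intro y hy
      simp only [coe_filter, mem_univ, true_and, Set.mem_ofPred_eq] at hy ⊢
      field_simp
      linear_combination hy
    · intro x _
      field_simp
      ring
    · intro y _
      field_simp
      ring
  rw [hcomplete, quadraticChar_card_sqrts hF]

lemma sum_quadraticChar_quartic (hF : ringChar F ≠ 2) :
    ∑ x : F, quadraticChar F ((x ^ 2 - 1) * (x ^ 2 + 4 * x - 1)) =
      (∑ u : F, quadraticChar F (u * (u ^ 2 + u - 1))) - 1 := by
  have hmaps : ∀ x ∈ univ.erase (1 : F), (x + 1) / (x - 1) ∈ univ.erase (1 : F) := fun x hx =>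
    mem_erase.mpr ⟨cayley_ne_one hF (mem_erase.mp hx).1, mem_univ _⟩
  have hinv : ∀ x ∈ univ.erase (1 : F), ((x + 1) / (x - 1) + 1) / ((x + 1) / (x - 1) - 1) = x :=
    fun x hx => cayley_cayley hF (mem_erase.mp hx).1
  have hsubst : ∀ x ∈ univ.erase (1 : F),
      quadraticChar F ((x ^ 2 - 1) * (x ^ 2 + 4 * x - 1)) =
        quadraticChar F ((x + 1) / (x - 1) * (((x + 1) / (x - 1)) ^ 2 + (x + 1) / (x - 1) - 1)) := by
    intro x hx
    have hx1 : x - 1 ≠ 0 := sub_ne_zero.mpr (mem_erase.mp hx).1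
    have hquartic : (x ^ 2 - 1) * (x ^ 2 + 4 * x - 1) =
        (x + 1) / (x - 1) * (((x + 1) / (x - 1)) ^ 2 + (x + 1) / (x - 1) - 1) * ((x - 1) ^ 2) ^ 2 := by
      field_simp
      ring
    rw [hquartic, quadraticChar_mul_sq _ (pow_ne_zero 2 hx1)]
  have hbij : ∑ x ∈ univ.erase (1 : F), quadraticChar F ((x ^ 2 - 1) * (x ^ 2 + 4 * x - 1)) =
      ∑ u ∈ univ.erase (1 : F), quadraticChar F (u * (u ^ 2 + u - 1)) :=
    sum_nbij' _ _ hmaps hmaps hinv hinv hsubst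
  rw [← sum_erase_add _ _ (mem_univ 1), ← sum_erase_add _ _ (mem_univ 1), hbij]
  norm_num

lemma quadraticChar_eq_sum_roots (x : F) :
    quadraticChar F (x * (x ^ 2 + x - 1)) =
      ∑ t : F, if x ^ 2 - t * x - 1 = 0 then quadraticChar F (t + 1) else 0 := by
  by_cases hx : x = 0
  · simp [hx]
  have hroot : ∀ t : F, x ^ 2 - t * x - 1 = 0 ↔ t = x - x⁻¹ := fun t => by
    constructor
    · intro h
      field_simp
      linear_combination -h
    · rintro rfl
      field_simp
      ring
  have hcubic : x * (x ^ 2 + x - 1) = (x - x⁻¹ + 1) * x ^ 2 := by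
    field_simp
    ring
  simp only [hroot, sum_ite_eq', mem_univ, if_true, hcubic, quadraticChar_mul_sq _ hx]

lemma sum_quadraticChar_cubic (hF : ringChar F ≠ 2) :
    ∑ u : F, quadraticChar F (u * (u ^ 2 + u - 1)) =
      ∑ s : F, quadraticChar F (s * (s ^ 2 - 2 * s + 5)) := by
  have hcard : ∀ t : F, (#{x : F | x ^ 2 - t * x - 1 = 0} : ℤ) = quadraticChar F (t ^ 2 + 4) + 1 :=
    fun t => by
      convert card_roots_monic_quadratic hF (-t) (-1) using 4 <;> ring_nf
  calc ∑ u : F, quadraticChar F (u * (u ^ 2 + u - 1))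
      = ∑ t : F, ∑ x : F, if x ^ 2 - t * x - 1 = 0 then quadraticChar F (t + 1) else 0 := by
        simp only [quadraticChar_eq_sum_roots]
        exact sum_comm
    _ = ∑ t : F, quadraticChar F (t + 1) * (quadraticChar F (t ^ 2 + 4) + 1) := by
        refine sum_congr rfl fun t _ => ?_
        rw [← hcard, sum_ite, sum_const_zero, add_zero, sum_const, nsmul_eq_mul, mul_comm]
    _ = ∑ t : F, quadraticChar F ((t + 1) * (t ^ 2 + 4)) + ∑ t : F, quadraticChar F (t + 1) := by
        rw [← sum_add_distrib]
        exact sum_congr rfl fun t _ => by rw [map_mul]; ring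
    _ = ∑ t : F, quadraticChar F ((t + 1) * (t ^ 2 + 4)) := by
        rw [sum_quadraticChar_add_const hF, add_zero]
    _ = ∑ s : F, quadraticChar F (s * (s ^ 2 - 2 * s + 5)) :=
        Fintype.sum_equiv (Equiv.addRight 1) _ _ fun t => by
          simp only [Equiv.coe_addRight]
          ring_nf

end

theorem stmt_2 (F : Type*) [Field F] [Fintype F] [DecidableEq F]
    (hq3 : Fintype.card F % 4 = 3) :
    ∑ x : F, quadraticChar F ((x ^ 2 - 1) * (x ^ 2 + 4 * x - 1)) =
      (∑ x : F, quadraticChar F (x * (x ^ 2 - 2 * x + 5))) - 1 := by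
  have hF : ringChar F ≠ 2 := fun h => by
    have := FiniteField.even_card_iff_char_two.mp h
    omega
  rw [sum_quadraticChar_quartic hF, sum_quadraticChar_cubic hF]
end

section
/- Let q be an odd prime power with q ≡ 3 (mod 4) and q > 3, and set d = (q-3)/2. The number of triples (y₁, y₂, y₃) ∈ (F_q*)³ satisfying y₁ - y₂ + y₃ - 1 = 0 and y₁^d - y₂^d + y₃^d - 1 = 0, where additionally y₁, y₂, y₃ are all nonzero squares, equals q - 2. -/
/-!
Since `q ≡ 3 (mod 4)`, `-1` is not a square, and on nonzero squares `y ^ d = y⁻¹`.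
Clearing denominators in `a⁻¹ - b⁻¹ + c⁻¹ = 1` and substituting `b = a + c - 1` gives
`(a - 1) (c - 1) (a + c) = 0`; the last factor would force the square `b` to be `-1`.
Hence the solutions are `(1, t, t)` and `(t, t, 1)` for `t` a nonzero square: two families
of `(q - 1) / 2` triples meeting only in `(1, 1, 1)`.
-/

open Set

section Field

variable {K : Type*} [Field K]

theorem sub_one_mul_sub_one_mul_add_eq_zero {a b c : K} (ha : a ≠ 0) (hb : b ≠ 0)
    (hc : c ≠ 0) (h : a - b + c = 1) (hinv : a⁻¹ - b⁻¹ + c⁻¹ = 1) :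
    (a - 1) * (c - 1) * (a + c) = 0 := by
  linear_combination (-(a * b * c)) * hinv + (b * c) * mul_inv_cancel₀ ha
    - (a * c) * mul_inv_cancel₀ hb + (a * b) * mul_inv_cancel₀ hc - (a + c - a * c) * h

theorem eq_one_and_eq_or_eq_one_and_eq_of_sub_add_eq_one (hK : ¬IsSquare (-1 : K)) {a b c : K}
    (ha : a ≠ 0) (hb : b ≠ 0) (hc : c ≠ 0) (hbsq : IsSquare b) (h : a - b + c = 1)
    (hinv : a⁻¹ - b⁻¹ + c⁻¹ = 1) : (a = 1 ∧ b = c) ∨ (c = 1 ∧ a = b) := by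
  rcases mul_eq_zero.mp (sub_one_mul_sub_one_mul_add_eq_zero ha hb hc h hinv) with h' | h'
  · rcases mul_eq_zero.mp h' with h' | h'
    · exact .inl ⟨by linear_combination h', by linear_combination h' - h⟩
    · exact .inr ⟨by linear_combination h', by linear_combination h - h'⟩
  · exact absurd ((show b = -1 by linear_combination h' - h) ▸ hbsq) hK

end Field

theorem ncard_image_union_image_of_one_mem {α : Type*} [One α] [Finite α] {s : Set α}
    (h1 : 1 ∈ s) :
    ((fun t : α => ((1 : α), t, t)) '' s ∪ (fun t : α => (t, t, (1 : α))) '' s).ncard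
      = 2 * s.ncard - 1 := by
  have hinter : (fun t : α => ((1 : α), t, t)) '' s ∩ (fun t : α => (t, t, (1 : α))) '' s
      = {(1, 1, 1)} := by
    ext ⟨a, b, c⟩
    simp only [mem_inter_iff, mem_image, Prod.mk.injEq, mem_singleton_iff]
    constructor
    · rintro ⟨⟨t, -, rfl, rfl, rfl⟩, ⟨u, -, rfl, rfl, -⟩⟩
      exact ⟨rfl, rfl, rfl⟩
    · rintro ⟨rfl, rfl, rfl⟩
      exact ⟨⟨1, h1, rfl, rfl, rfl⟩, ⟨1, h1, rfl, rfl, rfl⟩⟩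
  have hunion := ncard_union_add_ncard_inter
    ((fun t : α => ((1 : α), t, t)) '' s) ((fun t : α => (t, t, (1 : α))) '' s)
  rw [hinter, ncard_singleton, ncard_image_of_injective _ fun x y h => by simpa using h,
    ncard_image_of_injective _ fun x y h => by simpa using h] at hunion
  omega

namespace FiniteField

variable {F : Type*} [Field F] [Fintype F]

theorem pow_card_sub_three_div_two_of_isSquare (hF : Fintype.card F % 2 = 1) {a : F}
    (ha : a ≠ 0) (hsq : IsSquare a) : a ^ ((Fintype.card F - 3) / 2) = a⁻¹ := by
  obtain ⟨z, rfl⟩ := hsq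
  have hz : z ≠ 0 := by rintro rfl; simp at ha
  have hexp : 2 * ((Fintype.card F - 3) / 2) + 2 = Fintype.card F - 1 := by
    have := Fintype.one_lt_card (α := F)
    omega
  refine eq_inv_of_mul_eq_one_left ?_
  calc (z * z) ^ ((Fintype.card F - 3) / 2) * (z * z)
      = z ^ (2 * ((Fintype.card F - 3) / 2) + 2) := by ring
    _ = 1 := by rw [hexp, pow_card_sub_one_eq_one z hz]

theorem ncard_setOf_ne_zero_and_isSquare (hF : Fintype.card F % 2 = 1) :
    {a : F | a ≠ 0 ∧ IsSquare a}.ncard = (Fintype.card F - 1) / 2 := by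
  have himage : {a : F | a ≠ 0 ∧ IsSquare a} =
      Units.val '' ((powMonoidHom 2 : Fˣ →* Fˣ).range : Set Fˣ) := by
    ext a
    simp only [mem_ofPred_eq, mem_image, SetLike.mem_coe, MonoidHom.mem_range, powMonoidHom_apply]
    constructor
    · rintro ⟨ha, z, rfl⟩
      have hz : z ≠ 0 := by rintro rfl; simp at ha
      exact ⟨Units.mk0 z hz ^ 2, ⟨Units.mk0 z hz, rfl⟩, by simp [sq]⟩
    · rintro ⟨_, ⟨u, rfl⟩, rfl⟩
      exact ⟨by simp, u, by simp [sq]⟩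
  have hgcd : (Fintype.card F - 1).gcd 2 = 2 :=
    Nat.gcd_eq_right (Nat.dvd_of_mod_eq_zero (by have := Fintype.one_lt_card (α := F); omega))
  rw [himage, ncard_image_of_injective _ Units.val_injective, ← Nat.card_coe_set_eq,
    SetLike.coe_sort_coe, IsCyclic.card_powMonoidHom_range, Nat.card_units,
    Nat.card_eq_fintype_card, hgcd]

theorem eq_one_and_eq_or_eq_one_and_eq_of_pow_sub_add_eq_one (hF : Fintype.card F % 4 = 3)
    {a b c : F} (ha : a ≠ 0) (hb : b ≠ 0) (hc : c ≠ 0) (hsa : IsSquare a) (hsb : IsSquare b)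
    (hsc : IsSquare c) (h : a - b + c = 1)
    (hpow : a ^ ((Fintype.card F - 3) / 2) - b ^ ((Fintype.card F - 3) / 2)
      + c ^ ((Fintype.card F - 3) / 2) = 1) :
    (a = 1 ∧ b = c) ∨ (c = 1 ∧ a = b) := by
  have hodd : Fintype.card F % 2 = 1 := by omega
  rw [pow_card_sub_three_div_two_of_isSquare hodd ha hsa,
    pow_card_sub_three_div_two_of_isSquare hodd hb hsb,
    pow_card_sub_three_div_two_of_isSquare hodd hc hsc] at hpow
  exact eq_one_and_eq_or_eq_one_and_eq_of_sub_add_eq_one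
    (isSquare_neg_one_iff.not_left.mpr hF) ha hb hc hsb h hpow

end FiniteField

theorem stmt_4_general (F : Type*) [Field F] [Fintype F]
    (hq3 : Fintype.card F % 4 = 3)
    (d : ℕ) (hd : d = (Fintype.card F - 3) / 2) :
    {y : F × F × F |
        y.1 ≠ 0 ∧ y.2.1 ≠ 0 ∧ y.2.2 ≠ 0 ∧
        IsSquare y.1 ∧ IsSquare y.2.1 ∧ IsSquare y.2.2 ∧
        y.1 - y.2.1 + y.2.2 - 1 = 0 ∧
        y.1 ^ d - y.2.1 ^ d + y.2.2 ^ d - 1 = 0}.ncard = Fintype.card F - 2 := by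
  set S := {a : F | a ≠ 0 ∧ IsSquare a}
  have hsol : {y : F × F × F |
        y.1 ≠ 0 ∧ y.2.1 ≠ 0 ∧ y.2.2 ≠ 0 ∧
        IsSquare y.1 ∧ IsSquare y.2.1 ∧ IsSquare y.2.2 ∧
        y.1 - y.2.1 + y.2.2 - 1 = 0 ∧
        y.1 ^ d - y.2.1 ^ d + y.2.2 ^ d - 1 = 0} =
      (fun t : F => ((1 : F), t, t)) '' S ∪ (fun t : F => (t, t, (1 : F))) '' S := by
    ext ⟨a, b, c⟩
    simp only [mem_ofPred_eq, mem_union, mem_image, Prod.mk.injEq, S]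
    constructor
    · rintro ⟨ha, hb, hc, hsa, hsb, hsc, h, hpow⟩
      rcases FiniteField.eq_one_and_eq_or_eq_one_and_eq_of_pow_sub_add_eq_one hq3 ha hb hc hsa hsb
        hsc (sub_eq_zero.mp h) (sub_eq_zero.mp (hd ▸ hpow)) with ⟨rfl, rfl⟩ | ⟨rfl, rfl⟩
      · exact .inl ⟨b, ⟨hb, hsb⟩, rfl, rfl, rfl⟩
      · exact .inr ⟨a, ⟨ha, hsa⟩, rfl, rfl, rfl⟩
    · rintro (⟨t, ⟨ht, hst⟩, rfl, rfl, rfl⟩ | ⟨t, ⟨ht, hst⟩, rfl, rfl, rfl⟩)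
      · exact ⟨one_ne_zero, ht, ht, .one, hst, hst, by ring, by ring⟩
      · exact ⟨ht, ht, one_ne_zero, hst, hst, .one, by ring, by ring⟩
  rw [hsol, ncard_image_union_image_of_one_mem (show (1 : F) ∈ S from ⟨one_ne_zero, .one⟩),
    FiniteField.ncard_setOf_ne_zero_and_isSquare (by omega)]
  omega

theorem stmt_4 (F : Type*) [Field F] [Fintype F] [DecidableEq F]
    (hq3 : Fintype.card F % 4 = 3) (hq : 3 < Fintype.card F)
    (d : ℕ) (hd : d = (Fintype.card F - 3) / 2) :
    {y : F × F × F |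
        y.1 ≠ 0 ∧ y.2.1 ≠ 0 ∧ y.2.2 ≠ 0 ∧
        IsSquare y.1 ∧ IsSquare y.2.1 ∧ IsSquare y.2.2 ∧
        y.1 - y.2.1 + y.2.2 - 1 = 0 ∧
        y.1 ^ d - y.2.1 ^ d + y.2.2 ^ d - 1 = 0}.ncard = Fintype.card F - 2 :=
  stmt_4_general F hq3 d hd
end

section
/- Let q be an odd prime power with q ≡ 3 (mod 4) and q > 3, and set d = (q-3)/2. There is no triple (y₁, y₂, y₃) ∈ (F_q*)³ with y₁ - y₂ + y₃ - 1 = 0 and y₁^d - y₂^d + y₃^d - 1 = 0 such that y₁ and y₃ are nonsquares and y₂ is a nonzero square. -/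
theorem stmt_5 (F : Type*) [Field F] [Fintype F] [DecidableEq F]
    (hq3 : Fintype.card F % 4 = 3) (hq : 3 < Fintype.card F)
    (d : ℕ) (hd : d = (Fintype.card F - 3) / 2) :
    ¬ ∃ y₁ y₂ y₃ : F, y₁ ≠ 0 ∧ y₂ ≠ 0 ∧ y₃ ≠ 0 ∧
        ¬ IsSquare y₁ ∧ ¬ IsSquare y₃ ∧ IsSquare y₂ ∧
        y₁ - y₂ + y₃ - 1 = 0 ∧
        y₁ ^ d - y₂ ^ d + y₃ ^ d - 1 = 0 := by
  rintro ⟨y₁, y₂, y₃, h1, h2, h3, ns1, ns3, sq2, e1, e2⟩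
  have hneg1 : ¬ IsSquare (-1 : F) := by
    rw [FiniteField.isSquare_neg_one_iff]; omega
  have hchar : ringChar F ≠ 2 := by
    intro h
    have := FiniteField.even_card_of_char_two (F := F) h
    omega
  have hdd : d + 1 = Fintype.card F / 2 := by omega
  have key : ∀ y : F, y ≠ 0 → y ^ (d + 1) = 1 ∨ y ^ (d + 1) = -1 := by
    intro y hy; rw [hdd]; exact FiniteField.pow_dichotomy hchar hy
  have pd : ∀ y : F, y ≠ 0 → ¬ IsSquare y → y ^ d = -y⁻¹ := by
    intro y hy hns
    rcases key y hy with h | h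
    · exact absurd ((FiniteField.isSquare_iff hchar hy).mpr (hdd ▸ h)) hns
    · have : y * y ^ d = -1 := by rw [← pow_succ']; exact h
      field_simp [hy] at this ⊢
      linear_combination this
  have ps : ∀ y : F, y ≠ 0 → IsSquare y → y ^ d = y⁻¹ := by
    intro y hy hs
    have h : y ^ (d + 1) = 1 := by
      rw [hdd]; exact (FiniteField.isSquare_iff hchar hy).mp hs
    have : y * y ^ d = 1 := by rw [← pow_succ']; exact h
    field_simp [hy] at this ⊢
    linear_combination this
  rw [pd y₁ h1 ns1, pd y₃ h3 ns3, ps y₂ h2 sq2] at e2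
  -- multiply out
  have e2' : y₂ * y₃ + y₁ * y₃ + y₁ * y₂ + y₁ * y₂ * y₃ = 0 := by
    field_simp at e2
    linear_combination -e2
  have factored : (1 + y₂) * (y₁ * y₃ + y₂) = 0 := by
    linear_combination e2' - y₂ * e1
  rcases mul_eq_zero.mp factored with h | h
  · have : y₂ = -1 := by linear_combination h
    exact hneg1 (this ▸ sq2)
  · -- y₁ y₃ = -y₂
    have h13 : IsSquare (y₁ * y₃) := by
      rw [FiniteField.isSquare_iff hchar (mul_ne_zero h1 h3), mul_pow, ← hdd]
      have a1 : y₁ ^ (d+1) = -1 := by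
        rcases key y₁ h1 with h' | h'
        · exact absurd ((FiniteField.isSquare_iff hchar h1).mpr (hdd ▸ h')) ns1
        · exact h'
      have a3 : y₃ ^ (d+1) = -1 := by
        rcases key y₃ h3 with h' | h'
        · exact absurd ((FiniteField.isSquare_iff hchar h3).mpr (hdd ▸ h')) ns3
        · exact h'
      rw [a1, a3]; ring
    have hval : y₁ * y₃ = -y₂ := by linear_combination h
    rcases sq2 with ⟨a, ha⟩
    rcases h13 with ⟨b, hb⟩
    have ha0 : a ≠ 0 := by rintro rfl; simp at ha; exact h2 ha
    apply hneg1
    refine ⟨b / a, ?_⟩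
    field_simp
    linear_combination hb - hval + ha
end

section
/- Let q be an odd prime power with q ≡ 3 (mod 4) and q > 3, and set d = (q-3)/2. The number of triples (y₁, y₂, y₃) ∈ (F_q*)³ satisfying y₁ - y₂ + y₃ - 1 = 0 and y₁^d - y₂^d + y₃^d - 1 = 0 such that y₁ is a square and y₂, y₃ are nonsquares equals (q-1)/2. -/
/-!
For nonzero `x` and `d + 1 = q / 2`, Euler's criterion gives `x ^ d = χ(x) x⁻¹`, so the second
equation becomes `a⁻¹ + b⁻¹ - c⁻¹ = 1`. Together with `a - b + c = 1` this forces either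
`a = 1, b = c`, or `a = -bc`; the latter is impossible because `-1`, `b`, `c` are nonsquares
while `a` is a square. The solutions are therefore `(1, n, n)` with `n` a nonsquare, and there
are `(q - 1) / 2` nonsquares.
-/

theorem eq_one_and_eq_or_eq_neg_mul_of_sub_add_eq_one {K : Type*} [Field K] (h2 : (2 : K) ≠ 0)
    {a b c : K} (ha : a ≠ 0) (hb : b ≠ 0) (hc : c ≠ 0)
    (h₁ : a - b + c = 1) (h₂ : a⁻¹ + b⁻¹ - c⁻¹ = 1) :
    (a = 1 ∧ b = c) ∨ a = -(b * c) := by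
  have h₂' : b * c + a * c - a * b = a * b * c := by
    field_simp at h₂
    linear_combination h₂
  -- `h₂'` with `b = a + c - 1` substituted
  have key : (a - 1) * (a * (c + 1) + c * (c - 1)) = 0 := by
    linear_combination (a + a * c - c) * h₁ - h₂'
  rcases mul_eq_zero.mp key with h | h
  · left
    exact ⟨by linear_combination h, by linear_combination h - h₁⟩
  · right
    have hc1 : c + 1 ≠ 0 := by
      intro h0
      apply h2
      linear_combination h - (a + c - 2) * h0
    apply mul_right_cancel₀ hc1
    linear_combination (1 + c) * h - c * (c + 1) * h₁

namespace FiniteField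

variable {F : Type*} [Field F] [Fintype F]

theorem isSquare_mul_iff {a b : F} (ha : a ≠ 0) (hb : b ≠ 0) :
    IsSquare (a * b) ↔ (IsSquare a ↔ IsSquare b) := by
  classical
  rw [← quadraticChar_one_iff_isSquare (mul_ne_zero ha hb), ← quadraticChar_one_iff_isSquare ha,
    ← quadraticChar_one_iff_isSquare hb, map_mul]
  rcases quadraticChar_dichotomy ha with h | h <;>
    rcases quadraticChar_dichotomy hb with h' | h' <;> simp [h, h']

theorem ncard_setOf_not_isSquare (hF : ringChar F ≠ 2) :
    {a : F | ¬IsSquare a}.ncard = (Fintype.card F - 1) / 2 := by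
  obtain ⟨g, hg⟩ := exists_nonsquare hF
  have hg0 : g ≠ 0 := by rintro rfl; exact hg IsSquare.zero
  have himage : (g * ·) '' {a : F | a ≠ 0 ∧ IsSquare a} = {a | ¬IsSquare a} := by
    ext b
    constructor
    · rintro ⟨a, ⟨ha0, ha⟩, rfl⟩
      simpa [isSquare_mul_iff hg0 ha0, hg] using ha
    · intro hb
      have hb0 : b ≠ 0 := by rintro rfl; exact hb IsSquare.zero
      refine ⟨g⁻¹ * b, ⟨mul_ne_zero (inv_ne_zero hg0) hb0, ?_⟩, mul_inv_cancel_left₀ hg0 b⟩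
      simpa [isSquare_mul_iff (inv_ne_zero hg0) hb0, isSquare_inv, hg] using hb
  have hcard := Set.ncard_image_of_injective {a : F | a ≠ 0 ∧ IsSquare a}
    (mul_right_injective₀ hg0)
  have hunion : {a : F | ¬IsSquare a} ∪ {a | a ≠ 0 ∧ IsSquare a} = {0}ᶜ := by
    ext a
    by_cases ha : IsSquare a <;> simp [ha]
    rintro rfl; exact ha IsSquare.zero
  have hsum := Set.ncard_union_eq (s := {a : F | ¬IsSquare a}) (t := {a | a ≠ 0 ∧ IsSquare a})
    (Set.disjoint_left.mpr fun a ha hb => ha hb.2)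
  rw [hunion, Set.ncard_compl, Set.ncard_singleton, Nat.card_eq_fintype_card,
    ← himage, hcard] at hsum
  rw [← himage, hcard]
  omega

theorem pow_eq_quadraticChar_mul_inv [DecidableEq F] (hF : ringChar F ≠ 2) {d : ℕ}
    (hd : d + 1 = Fintype.card F / 2) {x : F} (hx : x ≠ 0) :
    x ^ d = quadraticChar F x * x⁻¹ := by
  rw [quadraticChar_eq_pow_of_char_ne_two' hF, ← hd, pow_succ, mul_inv_cancel_right₀ hx]

theorem ringChar_ne_two_of_card_mod_four (hq3 : Fintype.card F % 4 = 3) : ringChar F ≠ 2 :=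
  fun h => by have := even_card_of_char_two h; omega

theorem square_nonsquare_solution_iff (hq3 : Fintype.card F % 4 = 3) {d : ℕ}
    (hd : d + 1 = Fintype.card F / 2) (a b c : F) :
    (a ≠ 0 ∧ b ≠ 0 ∧ c ≠ 0 ∧ IsSquare a ∧ ¬IsSquare b ∧ ¬IsSquare c ∧
      a - b + c - 1 = 0 ∧ a ^ d - b ^ d + c ^ d - 1 = 0) ↔ a = 1 ∧ b = c ∧ ¬IsSquare c := by
  classical
  have hF := ringChar_ne_two_of_card_mod_four hq3
  have hneg : ¬IsSquare (-1 : F) := by rw [isSquare_neg_one_iff]; omega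
  constructor
  · rintro ⟨ha0, hb0, hc0, ha, hb, hc, h₁, h₂⟩
    simp only [pow_eq_quadraticChar_mul_inv hF hd, ha0, hb0, hc0, ne_eq, not_false_eq_true,
      (quadraticChar_one_iff_isSquare ha0).mpr ha, quadraticChar_neg_one_iff_not_isSquare.mpr hb,
      quadraticChar_neg_one_iff_not_isSquare.mpr hc] at h₂
    rcases eq_one_and_eq_or_eq_neg_mul_of_sub_add_eq_one (Ring.two_ne_zero hF) ha0 hb0 hc0
      (by linear_combination h₁) (by push_cast at h₂; linear_combination h₂) with
      ⟨rfl, rfl⟩ | rfl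
    · exact ⟨rfl, rfl, hc⟩
    · rw [neg_eq_neg_one_mul, isSquare_mul_iff (neg_ne_zero.mpr one_ne_zero) (mul_ne_zero hb0 hc0),
        isSquare_mul_iff hb0 hc0] at ha
      tauto
  · rintro ⟨rfl, rfl, hb⟩
    have hb0 : b ≠ 0 := by rintro rfl; exact hb IsSquare.zero
    exact ⟨one_ne_zero, hb0, hb0, IsSquare.one, hb, hb, by ring, by simp⟩

end FiniteField

theorem stmt_6_general (F : Type*) [Field F] [Fintype F]
    (hq3 : Fintype.card F % 4 = 3)
    (d : ℕ) (hd : d = (Fintype.card F - 3) / 2) :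
    {y : F × F × F |
        y.1 ≠ 0 ∧ y.2.1 ≠ 0 ∧ y.2.2 ≠ 0 ∧
        IsSquare y.1 ∧ ¬ IsSquare y.2.1 ∧ ¬ IsSquare y.2.2 ∧
        y.1 - y.2.1 + y.2.2 - 1 = 0 ∧
        y.1 ^ d - y.2.1 ^ d + y.2.2 ^ d - 1 = 0}.ncard = (Fintype.card F - 1) / 2 := by
  have hd' : d + 1 = Fintype.card F / 2 := by omega
  calc _ = ((fun n : F => ((1 : F), n, n)) '' {n : F | ¬IsSquare n}).ncard := by
        congr 1
        ext ⟨a, b, c⟩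
        simp only [Set.mem_ofPred_eq, FiniteField.square_nonsquare_solution_iff hq3 hd',
          Set.mem_image, Prod.mk.injEq]
        constructor
        · rintro ⟨rfl, rfl, hb⟩
          exact ⟨b, hb, rfl, rfl, rfl⟩
        · rintro ⟨n, hn, rfl, rfl, rfl⟩
          exact ⟨rfl, rfl, hn⟩
    _ = (Fintype.card F - 1) / 2 := by
        rw [Set.ncard_image_of_injective _ fun x y h => congrArg (·.2.1) h,
          FiniteField.ncard_setOf_not_isSquare (FiniteField.ringChar_ne_two_of_card_mod_four hq3)]

theorem stmt_6 (F : Type*) [Field F] [Fintype F] [DecidableEq F]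
    (hq3 : Fintype.card F % 4 = 3) (hq : 3 < Fintype.card F)
    (d : ℕ) (hd : d = (Fintype.card F - 3) / 2) :
    {y : F × F × F |
        y.1 ≠ 0 ∧ y.2.1 ≠ 0 ∧ y.2.2 ≠ 0 ∧
        IsSquare y.1 ∧ ¬ IsSquare y.2.1 ∧ ¬ IsSquare y.2.2 ∧
        y.1 - y.2.1 + y.2.2 - 1 = 0 ∧
        y.1 ^ d - y.2.1 ^ d + y.2.2 ^ d - 1 = 0}.ncard = (Fintype.card F - 1) / 2 :=
  stmt_6_general F hq3 d hd
end

section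
/- Let q be an odd prime power with q ≡ 3 (mod 4) and q > 3, set d = (q-3)/2, and suppose 5 is a nonsquare in F_q. Then the equation (x+1)^d - x^d = 1 has exactly one solution x ∈ F_q, namely x = 0. -/
theorem stmt_8 (F : Type*) [Field F] [Fintype F] [DecidableEq F]
    (hq3 : Fintype.card F % 4 = 3) (hq : 3 < Fintype.card F)
    (d : ℕ) (hd : d = (Fintype.card F - 3) / 2)
    (h5 : ¬ IsSquare (5 : F)) :
    {x : F | (x + 1) ^ d - x ^ d = 1} = {0} := by
  have h2d : 2 * d + 3 = Fintype.card F := by omega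
  have hdeven : d % 2 = 0 := by omega
  have hd0 : d ≠ 0 := by omega
  have h2ne : (2 : F) ≠ 0 := by
    intro h
    exact h5 ⟨1, by linear_combination (2:F) * h⟩
  ext x
  simp only [Set.mem_setOf_eq, Set.mem_singleton_iff]
  constructor
  · intro hx
    by_contra hx0
    have hxm1 : x ≠ -1 := by
      intro h
      subst h
      rw [neg_add_cancel, zero_pow hd0] at hx
      have hneg : (-1 : F) ^ d = 1 := by
        have hde : d = 2 * (d / 2) := by omega
        rw [hde, pow_mul]; simp
      rw [hneg] at hx
      apply h2ne
      linear_combination -hx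
    have hx1 : x + 1 ≠ 0 := fun h => hxm1 (by linear_combination h)
    have hcard : Fintype.card F - 1 = (d + 1) * 2 := by omega
    have e1sq : (x ^ (d + 1)) * (x ^ (d + 1)) = 1 := by
      rw [← pow_add]
      have : d + 1 + (d + 1) = (d + 1) * 2 := by ring
      rw [this, ← hcard]
      exact FiniteField.pow_card_sub_one_eq_one x hx0
    have e2sq : ((x + 1) ^ (d + 1)) * ((x + 1) ^ (d + 1)) = 1 := by
      rw [← pow_add]
      have : d + 1 + (d + 1) = (d + 1) * 2 := by ring
      rw [this, ← hcard]
      exact FiniteField.pow_card_sub_one_eq_one (x + 1) hx1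
    have e1 := mul_self_eq_one_iff.mp e1sq
    have e2 := mul_self_eq_one_iff.mp e2sq
    have hp1 : x ^ (d + 1) = x ^ d * x := pow_succ x d
    have hp2 : (x + 1) ^ (d + 1) = (x + 1) ^ d * (x + 1) := pow_succ (x + 1) d
    have key : (x + 1) ^ (d + 1) * x - x ^ (d + 1) * (x + 1) = x * (x + 1) := by
      linear_combination (x * (x + 1)) * hx + x * hp2 - (x + 1) * hp1
    rcases e1 with e1 | e1 <;> rcases e2 with e2 | e2 <;>
        rw [e1, e2] at key
    · -- case (1,1): x^2 + x + 1 = 0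
      have hxx : x ^ 2 + x + 1 = 0 := by linear_combination -key
      have hx1eq : x + 1 = -(x ^ 2) := by linear_combination hxx
      have : (-(x ^ 2)) ^ (d + 1) = 1 := by rw [← hx1eq]; exact e2
      rw [neg_pow, ← pow_mul] at this
      have hodd : Odd (d + 1) := ⟨d / 2, by omega⟩
      rw [hodd.neg_one_pow] at this
      have hxp : x ^ (2 * (d + 1)) = 1 := by
        rw [two_mul, pow_add, e1, one_mul]
      rw [hxp] at this
      apply h2ne
      linear_combination -this
    · -- e1 = 1, e2 = -1 : x^2 + 3x + 1 = 0, (2x+3)^2 = 5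
      exact h5 ⟨2 * x + 3, by linear_combination 4 * key⟩
    · -- e1 = -1, e2 = 1 : x^2 - x - 1 = 0, (2x-1)^2 = 5
      exact h5 ⟨2 * x - 1, by linear_combination 4 * key⟩
    · -- e1 = -1, e2 = -1 : x^2 + x - 1 = 0, (2x+1)^2 = 5
      exact h5 ⟨2 * x + 1, by linear_combination 4 * key⟩
  · rintro rfl
    simp [zero_pow hd0]
end

section
/- Let q be an odd prime power with q ≡ 3 (mod 4) and q > 3, set d = (q-3)/2, and suppose 5 is a nonzero square in F_q. Then the equation (x+1)^d - x^d = 1 has exactly three solutions x ∈ F_q. -/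
/-! Write `n = (q - 1) / 2 = d + 1`, which is odd, so `-1` is a nonsquare and `y ^ n = ±1` is the
quadratic character of `y ≠ 0`. For `x ≠ 0, -1`, multiplying the equation by `x (x + 1)` turns it
into `b x - a (x + 1) = x (x + 1)` with `a = x ^ n`, `b = (x + 1) ^ n`. Of the four sign patterns,
two force `x + 1 = -x²` or `x = -(x + 1)²`, contradicting the sign of `b` resp. `a`; the other two
say that `x` resp. `x + 1` is a nonsquare root of `y² = y + 1`. Since `5` is a square, the roots
`φ, 1 - φ` of `y² = y + 1` lie in `F_q`, and as their product `-1` is a nonsquare exactly one of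
them, `ψ`, is a nonsquare. Hence the solutions are `0, ψ, ψ - 1`. -/

theorem add_one_pow_sub_pow_eq_one_iff {K : Type*} [Field K] {x : K} (d : ℕ) (hx : x ≠ 0)
    (hx1 : x + 1 ≠ 0) :
    (x + 1) ^ d - x ^ d = 1 ↔ x * (x + 1) ^ (d + 1) - (x + 1) * x ^ (d + 1) = x * (x + 1) := by
  rw [pow_succ, pow_succ]
  constructor
  · intro h
    linear_combination x * (x + 1) * h
  · intro h
    apply mul_left_cancel₀ (mul_ne_zero hx hx1)
    linear_combination h

section FiniteField

variable {F : Type*} [Field F] [Fintype F]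

theorem ringChar_ne_two_of_card_mod_four_eq_three (hF : Fintype.card F % 4 = 3) :
    ringChar F ≠ 2 := fun h => by
  have := FiniteField.even_card_iff_char_two.mp h
  omega

theorem neg_one_pow_card_div_two (hF : Fintype.card F % 4 = 3) :
    (-1 : F) ^ (Fintype.card F / 2) = -1 :=
  Odd.neg_one_pow (by rw [Nat.odd_iff]; omega)

theorem sq_pow_card_div_two (hF : ringChar F ≠ 2) {t : F} (ht : t ≠ 0) :
    (t ^ 2) ^ (Fintype.card F / 2) = 1 := by
  rw [← pow_mul, Nat.two_mul_odd_div_two (FiniteField.odd_card_of_char_ne_two hF)]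
  exact FiniteField.pow_card_sub_one_eq_one t ht

theorem neg_sq_pow_card_div_two (hF : Fintype.card F % 4 = 3) {t : F} (ht : t ≠ 0) :
    (-t ^ 2) ^ (Fintype.card F / 2) = -1 := by
  rw [neg_eq_neg_one_mul, mul_pow, neg_one_pow_card_div_two hF,
    sq_pow_card_div_two (ringChar_ne_two_of_card_mod_four_eq_three hF) ht, mul_one]

variable (F) in
/-- By Euler's criterion, the second condition says that `y` is not a square. -/
def IsGoldenNonsquare (y : F) : Prop :=
  y ^ 2 = y + 1 ∧ y ^ (Fintype.card F / 2) = -1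

theorem add_one_pow_sub_pow_eq_one_iff_isGoldenNonsquare (hF : Fintype.card F % 4 = 3) {d : ℕ}
    (hd : d + 1 = Fintype.card F / 2) {x : F} (hx : x ≠ 0) (hx1 : x + 1 ≠ 0) :
    (x + 1) ^ d - x ^ d = 1 ↔ IsGoldenNonsquare F x ∨ IsGoldenNonsquare F (x + 1) := by
  have hF2 := ringChar_ne_two_of_card_mod_four_eq_three hF
  have hne := Ring.neg_one_ne_one_of_char_ne_two hF2
  rw [add_one_pow_sub_pow_eq_one_iff d hx hx1, hd, IsGoldenNonsquare, IsGoldenNonsquare]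
  constructor
  · intro key
    rcases FiniteField.pow_dichotomy hF2 hx with ha | ha <;>
      rcases FiniteField.pow_dichotomy hF2 hx1 with hb | hb <;> rw [ha, hb] at key
    · have hb' : (x + 1) ^ (Fintype.card F / 2) = -1 := by
        rw [show x + 1 = -x ^ 2 by linear_combination -key]
        exact neg_sq_pow_card_div_two hF hx
      exact absurd (hb'.symm.trans hb) hne
    · have ha' : x ^ (Fintype.card F / 2) = -1 := by
        rw [show x = -(x + 1) ^ 2 by linear_combination -key]
        exact neg_sq_pow_card_div_two hF hx1
      exact absurd (ha'.symm.trans ha) hne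
    · exact Or.inl ⟨by linear_combination -key, ha⟩
    · exact Or.inr ⟨by linear_combination -key, hb⟩
  · rintro (⟨hgold, ha⟩ | ⟨hgold, hb⟩)
    · have hb : (x + 1) ^ (Fintype.card F / 2) = 1 := by
        rw [← hgold]
        exact sq_pow_card_div_two hF2 hx
      rw [ha, hb]
      linear_combination -hgold
    · have ha : x ^ (Fintype.card F / 2) = -1 := by
        have hprod : (x * (x + 1)) ^ (Fintype.card F / 2) = 1 := by
          rw [show x * (x + 1) = 1 by linear_combination hgold, one_pow]
        rw [mul_pow, hb] at hprod
        linear_combination -hprod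
      rw [ha, hb]
      linear_combination -hgold

theorem IsGoldenNonsquare.unique (hF : Fintype.card F % 4 = 3) {y z : F}
    (hy : IsGoldenNonsquare F y) (hz : IsGoldenNonsquare F z) : y = z := by
  have hfac : (y - z) * (y + z - 1) = 0 := by linear_combination hy.1 - hz.1
  rcases mul_eq_zero.mp hfac with h | h
  · linear_combination h
  · have hprod : (y * z) ^ (Fintype.card F / 2) = 1 := by
      rw [mul_pow, hy.2, hz.2, neg_one_mul, neg_neg]
    rw [show y * z = -1 by linear_combination y * h - hy.1, neg_one_pow_card_div_two hF] at hprod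
    exact absurd hprod (Ring.neg_one_ne_one_of_char_ne_two
      (ringChar_ne_two_of_card_mod_four_eq_three hF))

theorem exists_isGoldenNonsquare (hF : Fintype.card F % 4 = 3) (h5 : IsSquare (5 : F)) :
    ∃ ψ : F, IsGoldenNonsquare F ψ := by
  have hF2 := ringChar_ne_two_of_card_mod_four_eq_three hF
  obtain ⟨s, hs⟩ := h5
  have hφ : ((1 + s) / 2) ^ 2 = (1 + s) / 2 + 1 := by
    have h2 := Ring.two_ne_zero hF2
    field_simp
    linear_combination -hs
  set φ : F := (1 + s) / 2
  have hφ0 : φ ≠ 0 := fun h => by simp [h] at hφ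
  have hprod : φ ^ (Fintype.card F / 2) * (1 - φ) ^ (Fintype.card F / 2) = -1 := by
    rw [← mul_pow, show φ * (1 - φ) = -1 by linear_combination -hφ, neg_one_pow_card_div_two hF]
  rcases FiniteField.pow_dichotomy hF2 hφ0 with h | h
  · rw [h, one_mul] at hprod
    exact ⟨1 - φ, by linear_combination hφ, hprod⟩
  · exact ⟨φ, hφ, h⟩

theorem setOf_add_one_pow_sub_pow_eq_one (hF : Fintype.card F % 4 = 3) {d : ℕ}
    (hd : d + 1 = Fintype.card F / 2) (hd0 : d ≠ 0) {ψ : F} (hψ : IsGoldenNonsquare F ψ) :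
    {x : F | (x + 1) ^ d - x ^ d = 1} = {0, ψ, ψ - 1} := by
  have h2 := Ring.two_ne_zero (ringChar_ne_two_of_card_mod_four_eq_three hF)
  ext x
  simp only [Set.mem_ofPred_eq, Set.mem_insert_iff, Set.mem_singleton_iff]
  by_cases hx : x = 0
  · simp [hx, hd0]
  by_cases hx1 : x + 1 = 0
  · have hdeven : Even d := by rw [Nat.even_iff]; omega
    obtain rfl : x = -1 := eq_neg_of_add_eq_zero_left hx1
    rw [hx1, zero_pow hd0, hdeven.neg_one_pow]
    refine iff_of_false (fun h => h2 (by linear_combination -h)) ?_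
    rintro (h | h | h)
    · exact hx h
    · exact one_ne_zero (by linear_combination hψ.1 + (ψ - 2) * h)
    · exact one_ne_zero (by linear_combination -hψ.1 - (ψ - 1) * h)
  have hiff : ∀ y, IsGoldenNonsquare F y ↔ y = ψ := fun y =>
    ⟨fun hy => hy.unique hF hψ, fun h => h ▸ hψ⟩
  rw [add_one_pow_sub_pow_eq_one_iff_isGoldenNonsquare hF hd hx hx1, hiff, hiff,
    ← eq_sub_iff_add_eq]
  simp [hx]

end FiniteField

theorem stmt_9_general (F : Type*) [Field F] [Fintype F]
    (hq3 : Fintype.card F % 4 = 3) (hq : 3 < Fintype.card F)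
    (h5sq : IsSquare (5 : F))
    (d : ℕ) (hd : d = (Fintype.card F - 3) / 2) :
    {x : F | (x + 1) ^ d - x ^ d = 1}.ncard = 3 := by
  obtain ⟨ψ, hψ⟩ := exists_isGoldenNonsquare hq3 h5sq
  have hψ0 : ψ ≠ 0 := fun h => one_ne_zero (by linear_combination (ψ - 1) * h - hψ.1)
  have hψ1 : ψ - 1 ≠ 0 := fun h => one_ne_zero (by linear_combination ψ * h - hψ.1)
  rw [setOf_add_one_pow_sub_pow_eq_one hq3 (by omega) (by omega) hψ, Set.ncard_eq_three]
  exact ⟨0, ψ, ψ - 1, hψ0.symm, hψ1.symm, fun h => one_ne_zero (by linear_combination h), rfl⟩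

theorem stmt_9 (F : Type*) [Field F] [Fintype F] [DecidableEq F]
    (hq3 : Fintype.card F % 4 = 3) (hq : 3 < Fintype.card F)
    (h5 : (5 : F) ≠ 0) (h5sq : IsSquare (5 : F))
    (d : ℕ) (hd : d = (Fintype.card F - 3) / 2) :
    {x : F | (x + 1) ^ d - x ^ d = 1}.ncard = 3 :=
  stmt_9_general F hq3 hq h5sq d hd
end

section
/- Let q be an odd prime power with q ≡ 3 (mod 4), q > 7, q ≠ 27, set d = (q-3)/2, and suppose 5 is a nonsquare in F_q. Then for every b ∈ F_q, the equation (x+1)^d - x^d = b has at most 2 solutions x ∈ F_q (i.e., F(x) = x^d is APN over F_q). -/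
section APNaux

variable {F : Type*} [Field F] {n : ℕ}

private lemma sign_facts {s : F} (hs : s = 1 ∨ s = -1) (hodd : Odd n) :
    s * s = 1 ∧ s ^ n = s ∧ s ≠ 0 := by
  rcases hs with rfl | rfl
  · exact ⟨by ring, one_pow n, one_ne_zero⟩
  · exact ⟨by ring, hodd.neg_one_pow, neg_ne_zero.mpr one_ne_zero⟩

private lemma aux_unmixed_pair (hodd : Odd n) (h2 : (2 : F) ≠ 0)
    {b w₁ w₂ s₁ s₂ : F}
    (hs₁ : s₁ = 1 ∨ s₁ = -1) (hs₂ : s₂ = 1 ∨ s₂ = -1)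
    (hw₁ : w₁ ^ n = s₁) (hw₁' : (w₁ + 1) ^ n = s₁)
    (he₁ : b * (w₁ * (w₁ + 1)) = -s₁)
    (hw₂ : w₂ ^ n = s₂) (hw₂' : (w₂ + 1) ^ n = s₂)
    (he₂ : b * (w₂ * (w₂ + 1)) = -s₂)
    (hne : w₁ ≠ w₂) : False := by
  obtain ⟨hss₁, hsn₁, hs₁0⟩ := sign_facts hs₁ hodd
  obtain ⟨hss₂, hsn₂, hs₂0⟩ := sign_facts hs₂ hodd
  have hb0 : b ≠ 0 := by
    rintro rfl
    rw [zero_mul] at he₁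
    exact hs₁0 (neg_eq_zero.mp he₁.symm)
  have h₁ : b ^ n * (w₁ ^ n * (w₁ + 1) ^ n) = (-s₁) ^ n := by
    rw [← mul_pow, ← mul_pow, he₁]
  rw [hw₁, hw₁', hodd.neg_pow, hsn₁, hss₁, mul_one] at h₁
  have h₂ : b ^ n * (w₂ ^ n * (w₂ + 1) ^ n) = (-s₂) ^ n := by
    rw [← mul_pow, ← mul_pow, he₂]
  rw [hw₂, hw₂', hodd.neg_pow, hsn₂, hss₂, mul_one] at h₂
  have hss : s₁ = s₂ := neg_injective (h₁.symm.trans h₂)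
  have hww : (w₁ - w₂) * (w₁ + w₂ + 1) = 0 := by
    have h3 : b * (w₁ * (w₁ + 1)) = b * (w₂ * (w₂ + 1)) := by
      rw [he₁, he₂, hss]
    have h4 := mul_left_cancel₀ hb0 h3
    linear_combination h4
  rcases mul_eq_zero.mp hww with h | h
  · exact hne (by linear_combination h)
  · have hw2 : w₂ = -(w₁ + 1) := by linear_combination h
    rw [hw2, hodd.neg_pow, hw₁'] at hw₂
    have h2s : (2 : F) * s₁ = 0 := by linear_combination hss - hw₂
    rcases mul_eq_zero.mp h2s with h' | h'
    · exact h2 h'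
    · exact hs₁0 h'

private lemma aux_mixed_pair (hodd : Odd n) (h2 : (2 : F) ≠ 0)
    (hsq : ∀ x : F, x ≠ 0 → x ^ n = 1 ∨ x ^ n = -1)
    {b w₁ w₂ s₁ s₂ : F}
    (hs₁ : s₁ = 1 ∨ s₁ = -1) (hs₂ : s₂ = 1 ∨ s₂ = -1)
    (hw₁ : w₁ ^ n = s₁) (hw₁' : (w₁ + 1) ^ n = -s₁)
    (he₁ : b * (w₁ * (w₁ + 1)) = -s₁ * (2 * w₁ + 1))
    (hw₂ : w₂ ^ n = s₂) (hw₂' : (w₂ + 1) ^ n = -s₂)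
    (he₂ : b * (w₂ * (w₂ + 1)) = -s₂ * (2 * w₂ + 1))
    (hne : w₁ ≠ w₂) : False := by
  obtain ⟨hss₁, hsn₁, hs₁0⟩ := sign_facts hs₁ hodd
  obtain ⟨hss₂, hsn₂, hs₂0⟩ := sign_facts hs₂ hodd
  by_cases hb0 : b = 0
  · subst hb0
    rw [zero_mul] at he₁ he₂
    have hu₁ : 2 * w₁ + 1 = 0 := by
      rcases mul_eq_zero.mp he₁.symm with h | h
      · exact absurd (neg_eq_zero.mp h) hs₁0
      · exact h
    have hu₂ : 2 * w₂ + 1 = 0 := by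
      rcases mul_eq_zero.mp he₂.symm with h | h
      · exact absurd (neg_eq_zero.mp h) hs₂0
      · exact h
    have hd : (2 : F) * (w₁ - w₂) = 0 := by linear_combination hu₁ - hu₂
    rcases mul_eq_zero.mp hd with h | h
    · exact h2 h
    · exact hne (by linear_combination h)
  · have hq₁ : b * (s₁ * (2 * w₁ + 1)) ^ 2 + 4 * (s₁ * (2 * w₁ + 1)) - b = 0 := by
      linear_combination (4 * s₁ ^ 2) * he₁ + (b - 4 * s₁ * (2 * w₁ + 1)) * hss₁
    have hq₂ : b * (s₂ * (2 * w₂ + 1)) ^ 2 + 4 * (s₂ * (2 * w₂ + 1)) - b = 0 := by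
      linear_combination (4 * s₂ ^ 2) * he₂ + (b - 4 * s₂ * (2 * w₂ + 1)) * hss₂
    have hzn₁ : (s₁ * (2 * w₁ + 1)) ^ n = b ^ n := by
      have h : b ^ n * (w₁ ^ n * (w₁ + 1) ^ n) = (-s₁ * (2 * w₁ + 1)) ^ n := by
        rw [← mul_pow, ← mul_pow, he₁]
      rw [hw₁, hw₁', mul_pow (-s₁), hodd.neg_pow, hsn₁] at h
      rw [mul_pow, hsn₁]
      linear_combination h + b ^ n * hss₁
    have hzn₂ : (s₂ * (2 * w₂ + 1)) ^ n = b ^ n := by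
      have h : b ^ n * (w₂ ^ n * (w₂ + 1) ^ n) = (-s₂ * (2 * w₂ + 1)) ^ n := by
        rw [← mul_pow, ← mul_pow, he₂]
      rw [hw₂, hw₂', mul_pow (-s₂), hodd.neg_pow, hsn₂] at h
      rw [mul_pow, hsn₂]
      linear_combination h + b ^ n * hss₂
    by_cases hz : s₁ * (2 * w₁ + 1) = s₂ * (2 * w₂ + 1)
    · rcases hs₁ with rfl | rfl <;> rcases hs₂ with rfl | rfl
      · -- s₁ = 1, s₂ = 1
        have hd : (2 : F) * (w₁ - w₂) = 0 := by linear_combination hz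
        rcases mul_eq_zero.mp hd with h | h
        · exact h2 h
        · exact hne (by linear_combination h)
      · -- s₁ = 1, s₂ = -1
        have hd : (2 : F) * (w₁ + w₂ + 1) = 0 := by linear_combination hz
        rcases mul_eq_zero.mp hd with h | h
        · exact h2 h
        · have hw2 : w₂ = -(w₁ + 1) := by linear_combination h
          rw [hw2, hodd.neg_pow, hw₁'] at hw₂
          exact h2 (by linear_combination hw₂)
      · -- s₁ = -1, s₂ = 1
        have hd : (2 : F) * (w₁ + w₂ + 1) = 0 := by linear_combination -hz
        rcases mul_eq_zero.mp hd with h | h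
        · exact h2 h
        · have hw2 : w₂ = -(w₁ + 1) := by linear_combination h
          rw [hw2, hodd.neg_pow, hw₁'] at hw₂
          exact h2 (by linear_combination -hw₂)
      · -- s₁ = -1, s₂ = -1
        have hd : (2 : F) * (w₁ - w₂) = 0 := by linear_combination -hz
        rcases mul_eq_zero.mp hd with h | h
        · exact h2 h
        · exact hne (by linear_combination h)
    · have hfac : (s₁ * (2 * w₁ + 1) - s₂ * (2 * w₂ + 1)) *
          (b * (s₁ * (2 * w₁ + 1) + s₂ * (2 * w₂ + 1)) + 4) = 0 := by
        linear_combination hq₁ - hq₂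
      rcases mul_eq_zero.mp hfac with h | h
      · exact hz (by linear_combination h)
      · have hb : b * (s₁ * (2 * w₁ + 1) * (s₂ * (2 * w₂ + 1)) + 1) = 0 := by
          linear_combination (s₁ * (2 * w₁ + 1)) * h - hq₁
        have hprod : s₁ * (2 * w₁ + 1) * (s₂ * (2 * w₂ + 1)) = -1 := by
          rcases mul_eq_zero.mp hb with h' | h'
          · exact absurd h' hb0
          · linear_combination h'
        have hp : (s₁ * (2 * w₁ + 1) * (s₂ * (2 * w₂ + 1))) ^ n = (-1 : F) ^ n := by
          rw [hprod]
        rw [mul_pow, hzn₁, hzn₂, hodd.neg_one_pow] at hp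
        rcases hsq b hb0 with h' | h' <;> rw [h'] at hp <;>
          exact h2 (by linear_combination hp)

private lemma aux_boundary (hodd : Odd n) (h2 : (2 : F) ≠ 0)
    (h5n : (5 : F) ^ n = -1) (h5ne : (5 : F) ≠ 0)
    (hsq : ∀ x : F, x ≠ 0 → x ^ n = 1 ∨ x ^ n = -1)
    {b w s t : F}
    (hb : b = 1 ∨ b = -1)
    (hs : s = 1 ∨ s = -1) (ht : t = 1 ∨ t = -1)
    (hw : w ^ n = s) (hw' : (w + 1) ^ n = t)
    (he : t * w - s * (w + 1) = b * (w * (w + 1))) : False := by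
  have five : ∀ v : F, v ^ 2 = 5 → False := by
    intro v hv
    have hv0 : v ≠ 0 := by
      rintro rfl
      rw [zero_pow (by norm_num : (2 : ℕ) ≠ 0)] at hv
      exact h5ne hv.symm
    have hpow : (5 : F) ^ n = (v ^ n) ^ 2 := by
      rw [← hv, ← pow_mul, mul_comm, pow_mul]
    rcases hsq v hv0 with h | h <;> rw [h, h5n] at hpow <;>
      exact h2 (by linear_combination -hpow)
  rcases hb with rfl | rfl <;> rcases hs with rfl | rfl <;> rcases ht with rfl | rfl
  · -- b=1 s=1 t=1
    have hq' : w * (w + 1) = -1 := by linear_combination -he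
    have hp : (w * (w + 1)) ^ n = (-1 : F) ^ n := by rw [hq']
    rw [mul_pow, hw, hw', hodd.neg_one_pow] at hp
    exact h2 (by linear_combination hp)
  · exact five (2 * w + 3) (by linear_combination -4 * he)
  · exact five (2 * w - 1) (by linear_combination -4 * he)
  · exact five (2 * w + 1) (by linear_combination -4 * he)
  · exact five (2 * w + 1) (by linear_combination 4 * he)
  · exact five (2 * w - 1) (by linear_combination 4 * he)
  · exact five (2 * w + 3) (by linear_combination 4 * he)
  · -- b=-1 s=-1 t=-1
    have hq' : w * (w + 1) = -1 := by linear_combination he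
    have hp : (w * (w + 1)) ^ n = (-1 : F) ^ n := by rw [hq']
    rw [mul_pow, hw, hw', hodd.neg_one_pow] at hp
    exact h2 (by linear_combination hp)

end APNaux

theorem stmt_11 (F : Type*) [Field F] [Fintype F] [DecidableEq F]
    (hq3 : Fintype.card F % 4 = 3) (hq : 7 < Fintype.card F)
    (hq27 : Fintype.card F ≠ 27)
    (d : ℕ) (hd : d = (Fintype.card F - 3) / 2)
    (h5 : ¬ IsSquare (5 : F)) :
    ∀ b : F, {x : F | (x + 1) ^ d - x ^ d = b}.ncard ≤ 2 := by
  intro b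
  by_contra hcon
  push_neg at hcon
  rw [Set.two_lt_ncard_iff (Set.toFinite _)] at hcon
  obtain ⟨x, y, z, hxS, hyS, hzS, hxy, hxz, hyz⟩ := hcon
  simp only [Set.mem_setOf_eq] at hxS hyS hzS
  set q := Fintype.card F with hqdef
  have hd0 : d ≠ 0 := by omega
  set n := (q - 1) / 2 with hndef
  have hdn : d + 1 = n := by omega
  have hnodd : Odd n := by rw [Nat.odd_iff]; omega
  have h2nq : n + n = q - 1 := by omega
  have hnm1 : ¬ IsSquare (-1 : F) := by
    rw [FiniteField.isSquare_neg_one_iff]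
    omega
  have h2 : (2 : F) ≠ 0 := by
    intro h20
    exact hnm1 (by rw [show (-1 : F) = 1 by linear_combination -h20]; exact IsSquare.one)
  have hsq : ∀ v : F, v ≠ 0 → v ^ n = 1 ∨ v ^ n = -1 := by
    intro v hv
    have h1 : v ^ n * v ^ n = 1 := by
      rw [← pow_add, h2nq, hqdef]
      exact FiniteField.pow_card_sub_one_eq_one v hv
    exact mul_self_eq_one_iff.mp h1
  have h5ne : (5 : F) ≠ 0 := fun h => h5 ⟨0, by rw [h]; ring⟩
  have hchar : ringChar F ≠ 2 := by
    intro hc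
    apply h2
    have hcast := CharP.cast_eq_zero F (ringChar F)
    rw [hc] at hcast
    exact_mod_cast hcast
  have h5n : (5 : F) ^ n = -1 := by
    rcases hsq 5 h5ne with h | h
    · exfalso
      apply h5
      rw [FiniteField.isSquare_iff hchar h5ne]
      have hcd : Fintype.card F / 2 = n := by omega
      rw [hcd]
      exact h
    · exact h
  have hsol : ∀ w : F, (w + 1) ^ d - w ^ d = b →
      (w + 1) ^ n * w - w ^ n * (w + 1) = b * (w * (w + 1)) := by
    intro w hw
    have e1 : w ^ d * w = w ^ n := by rw [← pow_succ, hdn]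
    have e2 : (w + 1) ^ d * (w + 1) = (w + 1) ^ n := by rw [← pow_succ, hdn]
    linear_combination (w * (w + 1)) * hw - w * e2 + (w + 1) * e1
  by_cases hb1 : b * b = 1
  · have hbor : b = 1 ∨ b = -1 := mul_self_eq_one_iff.mp hb1
    have hbd : ∀ w : F, (w + 1) ^ d - w ^ d = b → w = 0 ∨ w = -1 := by
      intro w hw
      by_contra hcc
      push_neg at hcc
      obtain ⟨hw0, hw1⟩ := hcc
      have hw10 : w + 1 ≠ 0 := fun h => hw1 (by linear_combination h)
      exact aux_boundary hnodd h2 h5n h5ne hsq hbor (hsq w hw0) (hsq _ hw10) rfl rfl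
        (hsol w hw)
    rcases hbd x hxS with rfl | rfl <;> rcases hbd y hyS with rfl | rfl <;>
      rcases hbd z hzS with rfl | rfl <;> simp_all
  · have hnb : ∀ w : F, (w + 1) ^ d - w ^ d = b → w ≠ 0 ∧ w ≠ -1 := by
      intro w hw
      constructor
      · rintro rfl
        apply hb1
        have hb' : b = 1 := by
          rw [← hw, zero_pow hd0]
          norm_num
        rw [hb']
        ring
      · rintro rfl
        apply hb1
        have h0 : (-1 + 1 : F) = 0 := by ring
        rw [h0, zero_pow hd0] at hw
        have hb' : b = -(-1 : F) ^ d := by linear_combination -hw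
        rw [hb', neg_mul_neg, ← pow_add]
        exact Even.neg_one_pow ⟨d, rfl⟩
    obtain ⟨hx0, hx1⟩ := hnb x hxS
    obtain ⟨hy0, hy1⟩ := hnb y hyS
    obtain ⟨hz0, hz1⟩ := hnb z hzS
    have hx10 : x + 1 ≠ 0 := fun h => hx1 (by linear_combination h)
    have hy10 : y + 1 ≠ 0 := fun h => hy1 (by linear_combination h)
    have hz10 : z + 1 ≠ 0 := fun h => hz1 (by linear_combination h)
    have hgrp : ∀ w : F, w ≠ 0 → w + 1 ≠ 0 → ¬((w + 1) ^ n = w ^ n) →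
        (w + 1) ^ n = -(w ^ n) := by
      intro w hw0 hw10 hne'
      rcases hsq w hw0 with h | h <;> rcases hsq (w + 1) hw10 with h' | h'
      · exact absurd (h'.trans h.symm) hne'
      · rw [h, h'] <;> ring
      · rw [h, h'] <;> ring
      · exact absurd (h'.trans h.symm) hne'
    have pair : ∀ w₁ w₂ : F, (w₁ + 1) ^ d - w₁ ^ d = b → (w₂ + 1) ^ d - w₂ ^ d = b →
        w₁ ≠ w₂ → w₁ ≠ 0 → w₁ + 1 ≠ 0 → w₂ ≠ 0 → w₂ + 1 ≠ 0 →
        (((w₁ + 1) ^ n = w₁ ^ n) ↔ ((w₂ + 1) ^ n = w₂ ^ n)) → False := by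
      intro w₁ w₂ h1 h2' hne hw10 hw11 hw20 hw21 hiff
      have hE₁ := hsol w₁ h1
      have hE₂ := hsol w₂ h2'
      by_cases hg : (w₁ + 1) ^ n = w₁ ^ n
      · have hg₂ : (w₂ + 1) ^ n = w₂ ^ n := hiff.mp hg
        refine aux_unmixed_pair (b := b) hnodd h2 (hsq w₁ hw10) (hsq w₂ hw20) rfl hg ?_ rfl hg₂ ?_ hne
        · linear_combination w₁ * hg - hE₁
        · linear_combination w₂ * hg₂ - hE₂
      · have hg₂ : ¬((w₂ + 1) ^ n = w₂ ^ n) := fun h => hg (hiff.mpr h)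
        have hm₁ := hgrp w₁ hw10 hw11 hg
        have hm₂ := hgrp w₂ hw20 hw21 hg₂
        refine aux_mixed_pair (b := b) hnodd h2 hsq (hsq w₁ hw10) (hsq w₂ hw20) rfl hm₁ ?_ rfl hm₂ ?_ hne
        · linear_combination w₁ * hm₁ - hE₁
        · linear_combination w₂ * hm₂ - hE₂
    by_cases gx : (x + 1) ^ n = x ^ n <;> by_cases gy : (y + 1) ^ n = y ^ n <;>
      by_cases gz : (z + 1) ^ n = z ^ n
    · exact pair x y hxS hyS hxy hx0 hx10 hy0 hy10 (iff_of_true gx gy)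
    · exact pair x y hxS hyS hxy hx0 hx10 hy0 hy10 (iff_of_true gx gy)
    · exact pair x z hxS hzS hxz hx0 hx10 hz0 hz10 (iff_of_true gx gz)
    · exact pair y z hyS hzS hyz hy0 hy10 hz0 hz10 (iff_of_false gy gz)
    · exact pair y z hyS hzS hyz hy0 hy10 hz0 hz10 (iff_of_true gy gz)
    · exact pair x z hxS hzS hxz hx0 hx10 hz0 hz10 (iff_of_false gx gz)
    · exact pair x y hxS hyS hxy hx0 hx10 hy0 hy10 (iff_of_false gx gy)
    · exact pair x y hxS hyS hxy hx0 hx10 hy0 hy10 (iff_of_false gx gy)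
end

section
/- Let q be an odd prime power with q ≡ 3 (mod 4), q > 7, set d = (q-3)/2. Then for every b ∈ F_q, the equation (x+1)^d - x^d = b has at most 3 solutions x ∈ F_q. -/
section Aux

variable {F : Type*} [Field F]

private lemma sq1' {ε : F} (h : ε = 1 ∨ ε = -1) : ε * ε = 1 := by
  rcases h with h | h <;> simp [h]

private lemma pow_self' {n : ℕ} (hneg : (-1:F)^n = -1) {ε : F} (h : ε = 1 ∨ ε = -1) :
    ε ^ n = ε := by
  rcases h with h | h <;> simp [h, hneg]

/-- equal-sign class: at most one solution -/
private lemma auxE {n : ℕ} (h2 : (2:F) ≠ 0) (hneg : (-1:F)^n = -1) {b x y : F}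
    (hb : b ≠ 0) (hx0 : x ≠ 0) (hy0 : y ≠ 0)
    (hdx : x^n = 1 ∨ x^n = -1) (hdy : y^n = 1 ∨ y^n = -1)
    (hex : (x+1)^n * x - x^n * (x+1) = b * (x * (x+1)))
    (hey : (y+1)^n * y - y^n * (y+1) = b * (y * (y+1)))
    (hEx : (x+1)^n = x^n) (hEy : (y+1)^n = y^n) : x = y := by
  have h1x : b * (x * (x+1)) = -x^n := by rw [hEx] at hex; linear_combination -hex
  have h1y : b * (y * (y+1)) = -y^n := by rw [hEy] at hey; linear_combination -hey
  have hbx : b^n = -x^n := by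
    have h := congrArg (· ^ n) h1x
    simp only [mul_pow] at h
    rw [hEx, sq1' hdx, mul_one] at h
    rw [h, ← neg_one_mul, mul_pow, hneg, pow_self' hneg hdx]
  have hby : b^n = -y^n := by
    have h := congrArg (· ^ n) h1y
    simp only [mul_pow] at h
    rw [hEy, sq1' hdy, mul_one] at h
    rw [h, ← neg_one_mul, mul_pow, hneg, pow_self' hneg hdy]
  have hxy : x^n = y^n := by
    have := hbx.symm.trans hby
    linear_combination -this
  have hfac : (x - y) * (x + y + 1) = 0 := by
    have : b * (x * (x+1)) = b * (y * (y+1)) := by rw [h1x, h1y, hxy]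
    have h3 := mul_left_cancel₀ hb this
    linear_combination h3
  rcases mul_eq_zero.mp hfac with h | h
  · exact sub_eq_zero.mp h
  · exfalso
    have hyx : y = -(x+1) := by linear_combination h
    have : y^n = -x^n := by
      rw [hyx, ← neg_one_mul, mul_pow, hneg, hEx]; ring
    rw [← hxy] at this
    have hx2 : (2:F) * x^n = 0 := by linear_combination this
    rcases hdx with h' | h' <;> rw [h'] at hx2
    · exact h2 (by linear_combination hx2)
    · exact h2 (by linear_combination -hx2)

end Aux

section Aux2

variable {F : Type*} [Field F]

private lemma auxAA {n : ℕ} (h2 : (2:F) ≠ 0) (hneg : (-1:F)^n = -1) {b x y : F}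
    (hxn : x^n = 1) (hx1n : (x+1)^n = -1)
    (hyn : y^n = 1) (hy1n : (y+1)^n = -1)
    (hQx : b*x^2 + (b+2)*x + 1 = 0) (hQy : b*y^2 + (b+2)*y + 1 = 0) : x = y := by
  by_contra hne
  have h5 : (x - y) * (b*(x+y) + (b+2)) = 0 := by linear_combination hQx - hQy
  have hsum : b*(x+y) + (b+2) = 0 := by
    rcases mul_eq_zero.mp h5 with h | h
    · exact absurd (sub_eq_zero.mp h) hne
    · exact h
  have hprod : b*(x*y) = 1 := by linear_combination x*hsum - hQx
  have hp1 : b*((x+1)*(y+1)) = -1 := by linear_combination hprod + hsum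
  have e1 := congrArg (· ^ n) hprod
  simp only [mul_pow, one_pow] at e1
  rw [hxn, hyn] at e1
  have e2 := congrArg (· ^ n) hp1
  simp only [mul_pow] at e2
  rw [hx1n, hy1n, hneg] at e2
  exact h2 (by linear_combination e2 - e1)

private lemma auxBB {n : ℕ} (h2 : (2:F) ≠ 0) (hneg : (-1:F)^n = -1) {b x y : F}
    (hxn : x^n = -1) (hx1n : (x+1)^n = 1)
    (hyn : y^n = -1) (hy1n : (y+1)^n = 1)
    (hQx : b*x^2 + (b-2)*x - 1 = 0) (hQy : b*y^2 + (b-2)*y - 1 = 0) : x = y := by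
  by_contra hne
  have h5 : (x - y) * (b*(x+y) + (b-2)) = 0 := by linear_combination hQx - hQy
  have hsum : b*(x+y) + (b-2) = 0 := by
    rcases mul_eq_zero.mp h5 with h | h
    · exact absurd (sub_eq_zero.mp h) hne
    · exact h
  have hprod : b*(x*y) = -1 := by linear_combination x*hsum - hQx
  have hp1 : b*((x+1)*(y+1)) = 1 := by linear_combination hprod + hsum
  have e1 := congrArg (· ^ n) hprod
  simp only [mul_pow] at e1
  rw [hxn, hyn, hneg] at e1
  have e2 := congrArg (· ^ n) hp1
  simp only [mul_pow, one_pow] at e2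
  rw [hx1n, hy1n] at e2
  exact h2 (by linear_combination e1 - e2)

private lemma auxAB {n : ℕ} (h2 : (2:F) ≠ 0) (hneg : (-1:F)^n = -1) {b x y : F}
    (hb : b ≠ 0) (hdb : b^n * b^n = 1)
    (hxn : x^n = 1) (hx1n : (x+1)^n = -1)
    (hyn : y^n = -1) (hy1n : (y+1)^n = 1)
    (hQx : b*x^2 + (b+2)*x + 1 = 0) (hQy : b*y^2 + (b-2)*y - 1 = 0) : False := by
  have h5 : (x + y + 1) * (b*(y-x) - 2) = 0 := by linear_combination hQy - hQx
  rcases mul_eq_zero.mp h5 with h | h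
  · have hyx : y = -(x+1) := by linear_combination h
    rw [hyx, ← neg_one_mul, mul_pow, hneg, hx1n] at hyn
    exact h2 (by linear_combination hyn)
  · have hTb : b * ((2*x+1)*(2*y+1)) = b * 1 := by linear_combination (4*x+2)*h + 4*hQx
    have hT : (2*x+1)*(2*y+1) = 1 := mul_left_cancel₀ hb hTb
    have hxx : b * (x*(x+1)) = -(2*x+1) := by linear_combination hQx
    have hyy : b * (y*(y+1)) = 2*y+1 := by linear_combination hQy
    have e1 := congrArg (· ^ n) hxx
    simp only [mul_pow] at e1
    rw [hxn, hx1n] at e1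
    have hneg' : (-(2*x+1) : F)^n = -(2*x+1)^n := by
      rw [← neg_one_mul, mul_pow, hneg]; ring
    rw [hneg'] at e1
    have e1' : (2*x+1)^n = b^n := by linear_combination e1
    have e2 := congrArg (· ^ n) hyy
    simp only [mul_pow] at e2
    rw [hyn, hy1n] at e2
    have e3 := congrArg (· ^ n) hT
    simp only [mul_pow, one_pow] at e3
    rw [e1', ← e2] at e3
    exact h2 (by linear_combination -e3 - hdb)

end Aux2

theorem stmt_12 (F : Type*) [Field F] [Fintype F] [DecidableEq F]
    (hq3 : Fintype.card F % 4 = 3) (hq : 7 < Fintype.card F)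
    (d : ℕ) (hd : d = (Fintype.card F - 3) / 2) :
    ∀ b : F, {x : F | (x + 1) ^ d - x ^ d = b}.ncard ≤ 3 := by
  intro b
  classical
  have hchar : ringChar F ≠ 2 := by
    intro h
    have h' := FiniteField.even_card_of_char_two h
    omega
  have h2 : (2:F) ≠ 0 := Ring.two_ne_zero hchar
  have hd0 : d ≠ 0 := by omega
  have hdich : ∀ x : F, x ≠ 0 → x^(d+1) = 1 ∨ x^(d+1) = -1 := by
    intro x hx
    have hn : d + 1 = Fintype.card F / 2 := by omega
    rw [hn]; exact FiniteField.pow_dichotomy hchar hx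
  have hneg : (-1:F)^(d+1) = -1 := Odd.neg_one_pow ⟨d/2, by omega⟩
  have hdeven : (-1:F)^d = 1 := Even.neg_one_pow ⟨d/2, by omega⟩
  have hex : ∀ x : F, (x+1)^d - x^d = b →
      (x+1)^(d+1) * x - x^(d+1) * (x+1) = b * (x*(x+1)) := by
    intro x hx
    rw [pow_succ, pow_succ]
    linear_combination (x*(x+1)) * hx
  have hz : ((0:F)+1)^d - (0:F)^d = b → b = 1 := by
    intro h
    rw [zero_add, one_pow, zero_pow hd0, sub_zero] at h
    exact h.symm
  have hm1 : ((-1:F)+1)^d - (-1:F)^d = b → b = -1 := by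
    intro h
    rw [neg_add_cancel, zero_pow hd0, hdeven] at h
    linear_combination -h
  by_cases hb : b = 0
  · -- b = 0 : at most one solution
    subst hb
    have hsub : {x : F | (x + 1) ^ d - x ^ d = 0} ⊆ {-(2⁻¹:F)} := by
      intro x hx
      simp only [Set.mem_setOf_eq] at hx
      have hx0 : x ≠ 0 := by rintro rfl; exact one_ne_zero (hz hx).symm
      have hx1 : x + 1 ≠ 0 := by
        intro h
        have hxe : x = -1 := by linear_combination h
        subst hxe
        exact h2 (by linear_combination 2*(hm1 hx))
      have he := hex x hx
      rw [zero_mul] at he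
      have hinv : (2:F) * 2⁻¹ = 1 := mul_inv_cancel₀ h2
      rcases hdich x hx0 with h1 | h1 <;> rcases hdich (x+1) hx1 with h1' | h1' <;>
        rw [h1, h1'] at he
      · exact absurd (by linear_combination -he) one_ne_zero
      · have e : 2*x + 1 = 0 := by linear_combination -he
        simp only [Set.mem_singleton_iff]
        linear_combination 2⁻¹*e - x*hinv
      · have e : 2*x + 1 = 0 := by linear_combination he
        simp only [Set.mem_singleton_iff]
        linear_combination 2⁻¹*e - x*hinv
      · exact absurd (by linear_combination he) one_ne_zero
    calc {x : F | (x + 1) ^ d - x ^ d = 0}.ncard ≤ ({-(2⁻¹:F)} : Set F).ncard :=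
          Set.ncard_le_ncard hsub (Set.toFinite _)
      _ = 1 := Set.ncard_singleton _
      _ ≤ 3 := by omega
  · -- b ≠ 0
    have hdb : b^(d+1) * b^(d+1) = 1 := sq1' (hdich b hb)
    set S := {x : F | (x + 1) ^ d - x ^ d = b} with hS
    set T1 := {x : F | x ∈ S ∧ (x = 0 ∨ x = -1)} with hT1
    set T2 := {x : F | x ∈ S ∧ x ≠ 0 ∧ x + 1 ≠ 0 ∧ (x+1)^(d+1) = x^(d+1)} with hT2
    set T3 := {x : F | x ∈ S ∧ x ≠ 0 ∧ x + 1 ≠ 0 ∧ (x+1)^(d+1) ≠ x^(d+1)} with hT3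
    have hsub : S ⊆ T1 ∪ (T2 ∪ T3) := by
      intro x hxS
      by_cases hx0 : x = 0
      · exact Or.inl ⟨hxS, Or.inl hx0⟩
      by_cases hxm : x = -1
      · exact Or.inl ⟨hxS, Or.inr hxm⟩
      have hx1 : x + 1 ≠ 0 := by
        intro h; exact hxm (by linear_combination h)
      by_cases heq : (x+1)^(d+1) = x^(d+1)
      · exact Or.inr (Or.inl ⟨hxS, hx0, hx1, heq⟩)
      · exact Or.inr (Or.inr ⟨hxS, hx0, hx1, heq⟩)
    have hu1 : T1.ncard ≤ 1 := by
      rw [Set.ncard_le_one (Set.toFinite _)]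
      rintro a ⟨haS, ha | ha⟩ c ⟨hcS, hc | hc⟩ <;> subst ha <;> subst hc
      · rfl
      · exact absurd (by linear_combination (hm1 hcS) - (hz haS) : (2:F) = 0) h2
      · exact absurd (by linear_combination (hm1 haS) - (hz hcS) : (2:F) = 0) h2
      · rfl
    have hu2 : T2.ncard ≤ 1 := by
      rw [Set.ncard_le_one (Set.toFinite _)]
      rintro a ⟨haS, ha0, ha1, haE⟩ c ⟨hcS, hc0, hc1, hcE⟩
      exact auxE h2 hneg hb ha0 hc0 (hdich a ha0) (hdich c hc0)
        (hex a haS) (hex c hcS) haE hcE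
    have hu3 : T3.ncard ≤ 1 := by
      rw [Set.ncard_le_one (Set.toFinite _)]
      rintro a ⟨haS, ha0, ha1, haE⟩ c ⟨hcS, hc0, hc1, hcE⟩
      have hea := hex a haS
      have hec := hex c hcS
      have hA : (a^(d+1) = 1 ∧ (a+1)^(d+1) = -1) ∨ (a^(d+1) = -1 ∧ (a+1)^(d+1) = 1) := by
        rcases hdich a ha0 with h1 | h1 <;> rcases hdich (a+1) ha1 with h1' | h1'
        · exact absurd (h1'.trans h1.symm) haE
        · exact Or.inl ⟨h1, h1'⟩
        · exact Or.inr ⟨h1, h1'⟩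
        · exact absurd (h1'.trans h1.symm) haE
      have hC : (c^(d+1) = 1 ∧ (c+1)^(d+1) = -1) ∨ (c^(d+1) = -1 ∧ (c+1)^(d+1) = 1) := by
        rcases hdich c hc0 with h3 | h3 <;> rcases hdich (c+1) hc1 with h3' | h3'
        · exact absurd (h3'.trans h3.symm) hcE
        · exact Or.inl ⟨h3, h3'⟩
        · exact Or.inr ⟨h3, h3'⟩
        · exact absurd (h3'.trans h3.symm) hcE
      rcases hA with ⟨h1, h1'⟩ | ⟨h1, h1'⟩ <;> rcases hC with ⟨h3, h3'⟩ | ⟨h3, h3'⟩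
      · -- a type A, c type A
        rw [h1, h1'] at hea
        rw [h3, h3'] at hec
        have hQa : b*a^2 + (b+2)*a + 1 = 0 := by linear_combination -hea
        have hQc : b*c^2 + (b+2)*c + 1 = 0 := by linear_combination -hec
        exact auxAA h2 hneg h1 h1' h3 h3' hQa hQc
      · -- a type A, c type B
        rw [h1, h1'] at hea
        rw [h3, h3'] at hec
        have hQa : b*a^2 + (b+2)*a + 1 = 0 := by linear_combination -hea
        have hQc : b*c^2 + (b-2)*c - 1 = 0 := by linear_combination -hec
        exact absurd hQa (fun _ => auxAB h2 hneg hb hdb h1 h1' h3 h3' hQa hQc)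
      · -- a type B, c type A
        rw [h1, h1'] at hea
        rw [h3, h3'] at hec
        have hQa : b*a^2 + (b-2)*a - 1 = 0 := by linear_combination -hea
        have hQc : b*c^2 + (b+2)*c + 1 = 0 := by linear_combination -hec
        exact absurd hQa (fun _ => auxAB h2 hneg hb hdb h3 h3' h1 h1' hQc hQa)
      · -- a type B, c type B
        rw [h1, h1'] at hea
        rw [h3, h3'] at hec
        have hQa : b*a^2 + (b-2)*a - 1 = 0 := by linear_combination -hea
        have hQc : b*c^2 + (b-2)*c - 1 = 0 := by linear_combination -hec
        exact auxBB h2 hneg h1 h1' h3 h3' hQa hQc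
    calc S.ncard ≤ (T1 ∪ (T2 ∪ T3)).ncard := Set.ncard_le_ncard hsub (Set.toFinite _)
      _ ≤ T1.ncard + (T2 ∪ T3).ncard := Set.ncard_union_le _ _
      _ ≤ T1.ncard + (T2.ncard + T3.ncard) :=
          Nat.add_le_add_left (Set.ncard_union_le _ _) _
      _ ≤ 1 + (1 + 1) := by
          exact Nat.add_le_add hu1 (Nat.add_le_add hu2 hu3)
      _ = 3 := rfl
end

section
/- Let q be an odd prime power with q ≡ 3 (mod 4), q > 3, and d = (q-3)/2. Then for every c ∈ F_q with c ∉ {1,-1} and every b ∈ F_q, the equation (x+1)^d - c·x^d = b has at most 5 solutions x ∈ F_q. -/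
private def Vset {F : Type*} [Field F] (d n : ℕ) (c b e1 e2 : F) : Set F :=
  {x : F | (x + 1) ^ d - c * x ^ d = b ∧ x ≠ 0 ∧ x + 1 ≠ 0 ∧ x ^ n = e2 ∧ (x + 1) ^ n = e1}

private lemma aux_quad {F : Type*} [Field F] {d n : ℕ} (hdn : d + 1 = n)
    {c b e1 e2 x : F} (hx : (x + 1) ^ d - c * x ^ d = b)
    (he2 : x ^ n = e2) (he1 : (x + 1) ^ n = e1) :
    b * x ^ 2 + (b + c * e2 - e1) * x + c * e2 = 0 := by
  have ha : (x + 1) ^ d * (x + 1) = e1 := by rw [← pow_succ, hdn, he1]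
  have hb' : x ^ d * x = e2 := by rw [← pow_succ, hdn, he2]
  linear_combination (-(x * (x + 1))) * hx + x * ha + (-(c * (x + 1))) * hb'

private lemma aux_sum {F : Type*} [Field F] {b A K x1 x2 : F}
    (hq1 : b * x1 ^ 2 + A * x1 + K = 0) (hq2 : b * x2 ^ 2 + A * x2 + K = 0)
    (h12 : x1 ≠ x2) : b * (x1 + x2) = -A := by
  apply mul_left_cancel₀ (sub_ne_zero_of_ne h12)
  linear_combination hq1 - hq2

private lemma aux_prod {F : Type*} [Field F] {b A K x1 x2 : F}
    (hq1 : b * x1 ^ 2 + A * x1 + K = 0) (hq2 : b * x2 ^ 2 + A * x2 + K = 0)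
    (h12 : x1 ≠ x2) : b * (x1 * x2) = K := by
  apply mul_left_cancel₀ (sub_ne_zero_of_ne h12)
  linear_combination x2 * hq1 - x1 * hq2

private lemma aux_two {F : Type*} [Field F] {n : ℕ} (hm1n : (-1:F) ^ n = -1)
    (hcq : ∀ x : F, x ≠ 0 → x ^ n * x ^ n = 1) (hone : (1:F) ≠ -1)
    {b c e1 e2 x1 x2 : F}
    (hq1 : b * x1 ^ 2 + (b + c * e2 - e1) * x1 + c * e2 = 0)
    (hq2 : b * x2 ^ 2 + (b + c * e2 - e1) * x2 + c * e2 = 0)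
    (h12 : x1 ≠ x2)
    (hx10 : x1 ≠ 0) (hx20 : x2 ≠ 0) (hx11 : x1 + 1 ≠ 0) (hx21 : x2 + 1 ≠ 0)
    (he2a : x1 ^ n = e2) (he2b : x2 ^ n = e2)
    (he1a : (x1 + 1) ^ n = e1) (he1b : (x2 + 1) ^ n = e1)
    (he1v : e1 = 1 ∨ e1 = -1) (he2v : e2 = 1 ∨ e2 = -1) :
    b ≠ 0 ∧ e1 = b ^ n ∧ e2 = b ^ n * c ^ n ∧ b ≠ 1 ∧ b ≠ -c := by
  have hsum := aux_sum hq1 hq2 h12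
  have hprod := aux_prod hq1 hq2 h12
  have he1n0 : e1 ≠ 0 := by
    rcases he1v with rfl | rfl
    · exact one_ne_zero
    · exact neg_ne_zero.mpr one_ne_zero
  have he2n0 : e2 ≠ 0 := by
    rcases he2v with rfl | rfl
    · exact one_ne_zero
    · exact neg_ne_zero.mpr one_ne_zero
  have hb0 : b ≠ 0 := by
    intro h
    rw [h] at hsum hprod
    have hce : c * e2 = 0 := by linear_combination -hprod
    exact he1n0 (by linear_combination -hsum + hce)
  have hc0 : c ≠ 0 := by
    intro h
    rw [h] at hprod
    have hxx : x1 * x2 = 0 := by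
      apply mul_left_cancel₀ hb0
      linear_combination hprod
    rcases mul_eq_zero.mp hxx with h' | h'
    · exact hx10 h'
    · exact hx20 h'
  have he1sq : e1 * e1 = 1 := by rcases he1v with rfl | rfl <;> ring
  have he2sq : e2 * e2 = 1 := by rcases he2v with rfl | rfl <;> ring
  have he1n : e1 ^ n = e1 := by
    rcases he1v with rfl | rfl
    · exact one_pow n
    · exact hm1n
  have he2n : e2 ^ n = e2 := by
    rcases he2v with rfl | rfl
    · exact one_pow n
    · exact hm1n
  have hsh : b * ((x1 + 1) * (x2 + 1)) = e1 := by linear_combination hsum + hprod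
  have hBn : b ^ n = e1 := by
    have h : (b * ((x1 + 1) * (x2 + 1))) ^ n = e1 ^ n := by rw [hsh]
    rw [mul_pow, mul_pow, he1a, he1b, he1n] at h
    calc b ^ n = b ^ n * (e1 * e1) := by rw [he1sq, mul_one]
      _ = e1 := h
  have hCn : b ^ n = c ^ n * e2 := by
    have h : (b * (x1 * x2)) ^ n = (c * e2) ^ n := by rw [hprod]
    rw [mul_pow, mul_pow, mul_pow, he2a, he2b, he2n] at h
    calc b ^ n = b ^ n * (e2 * e2) := by rw [he2sq, mul_one]
      _ = c ^ n * e2 := h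
  have hc2 : c ^ n * c ^ n = 1 := hcq c hc0
  have he2g : e2 = b ^ n * c ^ n := by
    calc e2 = (c ^ n * c ^ n) * e2 := by rw [hc2, one_mul]
      _ = c ^ n * (c ^ n * e2) := by ring
      _ = c ^ n * b ^ n := by rw [← hCn]
      _ = b ^ n * c ^ n := mul_comm _ _
  refine ⟨hb0, hBn.symm, he2g, ?_, ?_⟩
  · intro hb1
    have he1' : e1 = 1 := by rw [← hBn, hb1, one_pow]
    have hsh' : (x1 + 1) * (x2 + 1) = 1 := by
      rw [hb1, one_mul] at hsh
      rw [hsh]; exact he1'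
    have hkey : x1 * (x2 + 1) = -x2 := by linear_combination hsh'
    have h : (x1 * (x2 + 1)) ^ n = (-x2) ^ n := by rw [hkey]
    have hng : (-x2) ^ n = -e2 := by
      rw [show (-x2) = (-1) * x2 by ring, mul_pow, hm1n, he2b]; ring
    rw [mul_pow, he2a, he1b, hng, he1'] at h
    rcases he2v with rfl | rfl
    · exact hone (by linear_combination h)
    · exact hone (by linear_combination -h)
  · intro hbc
    have hcn : (-c) ^ n = -(c ^ n) := by
      rw [show (-c) = (-1) * c by ring, mul_pow, hm1n]; ring
    have he2' : e2 = -1 := by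
      rw [he2g, hbc, hcn]; linear_combination -hc2
    have hmc : (-c : F) ≠ 0 := neg_ne_zero.mpr hc0
    have hxx : x1 * x2 = 1 := by
      apply mul_left_cancel₀ hmc
      rw [← hbc, hprod, he2', mul_one, hbc]; ring
    have hkey : x1 * (x2 + 1) = x1 + 1 := by linear_combination hxx
    have h : (x1 * (x2 + 1)) ^ n = (x1 + 1) ^ n := by rw [hkey]
    rw [mul_pow, he2a, he1b, he1a, he2'] at h
    rcases he1v with rfl | rfl
    · exact hone (by linear_combination -h)
    · exact hone (by linear_combination h)

private lemma aux_le2 {F : Type*} [Field F] [Fintype F] {d n : ℕ} (hdn : d + 1 = n)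
    (hm1n : (-1:F) ^ n = -1) (hcq : ∀ x : F, x ≠ 0 → x ^ n * x ^ n = 1)
    (hone : (1:F) ≠ -1) (c b e1 e2 : F)
    (he1v : e1 = 1 ∨ e1 = -1) (he2v : e2 = 1 ∨ e2 = -1) :
    (Vset d n c b e1 e2).ncard ≤ 2 := by
  by_contra hcon
  push_neg at hcon
  obtain ⟨x1, x2, x3, hx1, hx2, hx3, h12, h13, h23⟩ :=
    (Set.two_lt_ncard_iff (Set.toFinite _)).mp hcon
  simp only [Vset, Set.mem_setOf_eq] at hx1 hx2 hx3
  obtain ⟨hS1, h10, h11, he21, he11⟩ := hx1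
  obtain ⟨hS2, h20, h21, he22, he12⟩ := hx2
  obtain ⟨hS3, h30, h31, he23, he13⟩ := hx3
  have hq1 := aux_quad hdn hS1 he21 he11
  have hq2 := aux_quad hdn hS2 he22 he12
  have hq3 := aux_quad hdn hS3 he23 he13
  have htwo := aux_two hm1n hcq hone hq1 hq2 h12 h10 h20 h11 h21 he21 he22 he11 he12 he1v he2v
  have hs12 := aux_sum hq1 hq2 h12
  have hs13 := aux_sum hq1 hq3 h13
  exact h23 (mul_left_cancel₀ htwo.1 (by linear_combination hs12 - hs13))

private lemma aux_le1 {F : Type*} [Field F] [Fintype F] {d n : ℕ} (hdn : d + 1 = n)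
    (hm1n : (-1:F) ^ n = -1) (hcq : ∀ x : F, x ≠ 0 → x ^ n * x ^ n = 1)
    (hone : (1:F) ≠ -1) (c b e1 e2 : F)
    (he1v : e1 = 1 ∨ e1 = -1) (he2v : e2 = 1 ∨ e2 = -1)
    (hbad : ¬ (e1 = b ^ n ∧ e2 = b ^ n * c ^ n ∧ b ≠ 1 ∧ b ≠ -c)) :
    (Vset d n c b e1 e2).ncard ≤ 1 := by
  rw [Set.ncard_le_one_iff (Set.toFinite _)]
  intro x1 x2 hx1 hx2
  by_contra h12
  simp only [Vset, Set.mem_setOf_eq] at hx1 hx2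
  obtain ⟨hS1, h10, h11, he21, he11⟩ := hx1
  obtain ⟨hS2, h20, h21, he22, he12⟩ := hx2
  have hq1 := aux_quad hdn hS1 he21 he11
  have hq2 := aux_quad hdn hS2 he22 he12
  have htwo := aux_two hm1n hcq hone hq1 hq2 h12 h10 h20 h11 h21 he21 he22 he11 he12 he1v he2v
  exact hbad ⟨htwo.2.1, htwo.2.2.1, htwo.2.2.2.1, htwo.2.2.2.2⟩

theorem stmt_17 (F : Type*) [Field F] [Fintype F] [DecidableEq F]
    (hq3 : Fintype.card F % 4 = 3) (hq : 3 < Fintype.card F)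
    (d : ℕ) (hd : d = (Fintype.card F - 3) / 2) :
    ∀ c : F, c ≠ 1 → c ≠ -1 →
      ∀ b : F, {x : F | (x + 1) ^ d - c * x ^ d = b}.ncard ≤ 5 := by
  intro c hc1 hcm1 b
  obtain ⟨k, hk, hk1⟩ : ∃ k, Fintype.card F = 4 * k + 3 ∧ 1 ≤ k :=
    ⟨Fintype.card F / 4, by omega, by omega⟩
  set n := 2 * k + 1 with hn
  have hdn : d + 1 = n := by omega
  have hd0 : d ≠ 0 := by omega
  have hdeven : ((-1 : F)) ^ d = 1 := by
    have hdk : d = 2 * k := by omega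
    rw [hdk, pow_mul]; norm_num
  have hm1n : ((-1 : F)) ^ n = -1 := Odd.neg_one_pow ⟨k, by omega⟩
  have hchar : ringChar F ≠ 2 := by
    intro h
    have h' := FiniteField.even_card_of_char_two h
    omega
  have hone : (1 : F) ≠ -1 := fun h => Ring.neg_one_ne_one_of_char_ne_two hchar h.symm
  have hcq : ∀ x : F, x ≠ 0 → x ^ n * x ^ n = 1 := by
    intro x hx
    rw [← pow_add]
    have h' : n + n = Fintype.card F - 1 := by omega
    rw [h']
    exact FiniteField.pow_card_sub_one_eq_one x hx
  have hchi : ∀ x : F, x ≠ 0 → x ^ n = 1 ∨ x ^ n = -1 := by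
    intro x hx
    have h := hcq x hx
    have h' : (x ^ n - 1) * (x ^ n + 1) = 0 := by linear_combination h
    rcases mul_eq_zero.mp h' with h'' | h''
    · left; linear_combination h''
    · right; linear_combination h''
  set S := {x : F | (x + 1) ^ d - c * x ^ d = b} with hS
  have hsub : S ⊆ (S ∩ {0, -1}) ∪ Vset d n c b 1 1 ∪ Vset d n c b 1 (-1) ∪
      Vset d n c b (-1) 1 ∪ Vset d n c b (-1) (-1) := by
    intro x hx
    have hxe : (x + 1) ^ d - c * x ^ d = b := hx
    simp only [Set.mem_union, Set.mem_inter_iff, Set.mem_insert_iff, Set.mem_singleton_iff,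
      Vset, Set.mem_setOf_eq]
    by_cases hx0 : x = 0
    · exact Or.inl <| Or.inl <| Or.inl <| Or.inl ⟨hx, Or.inl hx0⟩
    by_cases hxm : x = -1
    · exact Or.inl <| Or.inl <| Or.inl <| Or.inl ⟨hx, Or.inr hxm⟩
    have hx1 : x + 1 ≠ 0 := fun h => hxm (by linear_combination h)
    rcases hchi x hx0 with h2x | h2x <;> rcases hchi (x + 1) hx1 with h1x | h1x
    · exact Or.inl <| Or.inl <| Or.inl <| Or.inr ⟨hxe, hx0, hx1, h2x, h1x⟩
    · exact Or.inl <| Or.inr ⟨hxe, hx0, hx1, h2x, h1x⟩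
    · exact Or.inl <| Or.inl <| Or.inr ⟨hxe, hx0, hx1, h2x, h1x⟩
    · exact Or.inr ⟨hxe, hx0, hx1, h2x, h1x⟩
  have hmono := Set.ncard_le_ncard hsub (Set.toFinite _)
  have u1 := Set.ncard_union_le (S ∩ {0, -1}) (Vset d n c b 1 1)
  have u2 := Set.ncard_union_le (S ∩ {0, -1} ∪ Vset d n c b 1 1) (Vset d n c b 1 (-1))
  have u3 := Set.ncard_union_le (S ∩ {0, -1} ∪ Vset d n c b 1 1 ∪ Vset d n c b 1 (-1))
    (Vset d n c b (-1) 1)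
  have u4 := Set.ncard_union_le
    (S ∩ {0, -1} ∪ Vset d n c b 1 1 ∪ Vset d n c b 1 (-1) ∪ Vset d n c b (-1) 1)
    (Vset d n c b (-1) (-1))
  have hSA : ∀ y ∈ S ∩ ({0, -1} : Set F), (y = 0 ∧ b = 1) ∨ (y = -1 ∧ b = -c) := by
    rintro y ⟨hyS, hy⟩
    have hye : (y + 1) ^ d - c * y ^ d = b := hyS
    rcases hy with rfl | hy
    · left
      refine ⟨rfl, ?_⟩
      rw [← hye, zero_pow hd0]
      norm_num
    · right
      rw [Set.mem_singleton_iff] at hy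
      subst hy
      refine ⟨rfl, ?_⟩
      rw [← hye, show (-1 : F) + 1 = 0 by ring, zero_pow hd0, hdeven]
      ring
  have hA : (S ∩ {0, -1}).ncard ≤ 1 := by
    rw [Set.ncard_le_one_iff (Set.toFinite _)]
    intro y z hy hz
    rcases hSA y hy with ⟨rfl, hb⟩ | ⟨rfl, hb⟩ <;> rcases hSA z hz with ⟨rfl, hb'⟩ | ⟨rfl, hb'⟩
    · rfl
    · exact (hcm1 (by linear_combination hb' - hb)).elim
    · exact (hcm1 (by linear_combination hb - hb')).elim
    · rfl
  by_cases hcase : b = 1 ∨ b = -c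
  · have hV : ∀ e1 e2 : F, (e1 = 1 ∨ e1 = -1) → (e2 = 1 ∨ e2 = -1) →
        (Vset d n c b e1 e2).ncard ≤ 1 := by
      intro e1 e2 hv1 hv2
      exact aux_le1 hdn hm1n hcq hone c b e1 e2 hv1 hv2 (by tauto)
    have b1 := hV 1 1 (Or.inl rfl) (Or.inl rfl)
    have b2 := hV 1 (-1) (Or.inl rfl) (Or.inr rfl)
    have b3 := hV (-1) 1 (Or.inr rfl) (Or.inl rfl)
    have b4 := hV (-1) (-1) (Or.inr rfl) (Or.inr rfl)
    omega
  · push_neg at hcase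
    have hA0 : (S ∩ {0, -1}).ncard = 0 := by
      rw [Set.ncard_eq_zero (Set.toFinite _), Set.eq_empty_iff_forall_notMem]
      intro y hy
      rcases hSA y hy with ⟨_, hb⟩ | ⟨_, hb⟩
      · exact hcase.1 hb
      · exact hcase.2 hb
    by_cases hB : b ^ n = 1
    · by_cases hC : b ^ n * c ^ n = 1
      · have b1 := aux_le2 hdn hm1n hcq hone c b 1 1 (Or.inl rfl) (Or.inl rfl)
        have b2 := aux_le1 hdn hm1n hcq hone c b 1 (-1) (Or.inl rfl) (Or.inr rfl)
          (by rintro ⟨-, h2', -, -⟩; exact hone (hC.symm.trans h2'.symm))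
        have b3 := aux_le1 hdn hm1n hcq hone c b (-1) 1 (Or.inr rfl) (Or.inl rfl)
          (by rintro ⟨h1', -, -, -⟩; exact hone (hB.symm.trans h1'.symm))
        have b4 := aux_le1 hdn hm1n hcq hone c b (-1) (-1) (Or.inr rfl) (Or.inr rfl)
          (by rintro ⟨h1', -, -, -⟩; exact hone (hB.symm.trans h1'.symm))
        omega
      · have b1 := aux_le1 hdn hm1n hcq hone c b 1 1 (Or.inl rfl) (Or.inl rfl)
          (by rintro ⟨-, h2', -, -⟩; exact hC h2'.symm)
        have b2 := aux_le2 hdn hm1n hcq hone c b 1 (-1) (Or.inl rfl) (Or.inr rfl)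
        have b3 := aux_le1 hdn hm1n hcq hone c b (-1) 1 (Or.inr rfl) (Or.inl rfl)
          (by rintro ⟨h1', -, -, -⟩; exact hone (hB.symm.trans h1'.symm))
        have b4 := aux_le1 hdn hm1n hcq hone c b (-1) (-1) (Or.inr rfl) (Or.inr rfl)
          (by rintro ⟨h1', -, -, -⟩; exact hone (hB.symm.trans h1'.symm))
        omega
    · by_cases hC : b ^ n * c ^ n = 1
      · have b1 := aux_le1 hdn hm1n hcq hone c b 1 1 (Or.inl rfl) (Or.inl rfl)
          (by rintro ⟨h1', -, -, -⟩; exact hB h1'.symm)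
        have b2 := aux_le1 hdn hm1n hcq hone c b 1 (-1) (Or.inl rfl) (Or.inr rfl)
          (by rintro ⟨h1', -, -, -⟩; exact hB h1'.symm)
        have b3 := aux_le2 hdn hm1n hcq hone c b (-1) 1 (Or.inr rfl) (Or.inl rfl)
        have b4 := aux_le1 hdn hm1n hcq hone c b (-1) (-1) (Or.inr rfl) (Or.inr rfl)
          (by rintro ⟨-, h2', -, -⟩; exact hone (hC.symm.trans h2'.symm))
        omega
      · have b1 := aux_le1 hdn hm1n hcq hone c b 1 1 (Or.inl rfl) (Or.inl rfl)
          (by rintro ⟨h1', -, -, -⟩; exact hB h1'.symm)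
        have b2 := aux_le1 hdn hm1n hcq hone c b 1 (-1) (Or.inl rfl) (Or.inr rfl)
          (by rintro ⟨h1', -, -, -⟩; exact hB h1'.symm)
        have b3 := aux_le1 hdn hm1n hcq hone c b (-1) 1 (Or.inr rfl) (Or.inl rfl)
          (by rintro ⟨-, h2', -, -⟩; exact hC h2'.symm)
        have b4 := aux_le2 hdn hm1n hcq hone c b (-1) (-1) (Or.inr rfl) (Or.inr rfl)
        omega
end

section
/- Let q be an odd prime power with q > 3 and d = (q-3)/2 a positive integer. Then for every c ∈ F_q with c ∉ {1,-1} and every b ∈ F_q, the equation (x+1)^d - c·x^d = b has at most 9 solutions x ∈ F_q. -/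
/-!
Since `2 * (d + 1) = q - 1`, for `x ∉ {0, -1}` both `ε = (x + 1) ^ (d + 1)` and `δ = x ^ (d + 1)`
are `±1`, so `(x + 1) ^ d = ε / (x + 1)` and `x ^ d = δ / x`. Clearing denominators, a solution
`x` is then a root of the nonzero quadratic `b x² + (b - ε + c δ) x + c δ`; the four sign choices
give at most `8` such solutions. Of `0` and `-1` at most one is a solution, because both would
force `c = ±1`.
-/

open Polynomial

section
variable {F : Type*} [Field F]

lemma FiniteField.pow_eq_one_or_eq_neg_one [Fintype F] {x : F} (hx : x ≠ 0) {m : ℕ}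
    (hm : 2 * m = Fintype.card F - 1) : x ^ m = 1 ∨ x ^ m = -1 :=
  mul_self_eq_one_iff.mp <| by
    rw [← pow_add, ← two_mul, hm]; exact FiniteField.pow_card_sub_one_eq_one x hx

/-- The equation `ε / (x + 1) - c δ / x = b` multiplied by `x (x + 1)`. -/
noncomputable def clearedQuadratic (b c ε δ : F) : F[X] :=
  C b * X ^ 2 + C (b - ε + c * δ) * X + C (c * δ)

lemma clearedQuadratic_ne_zero (b c δ : F) {ε : F} (hε : ε ≠ 0) :
    clearedQuadratic b c ε δ ≠ 0 := by
  intro h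
  have h0 := congrArg (coeff · 0) h
  have h1 := congrArg (coeff · 1) h
  have h2 := congrArg (coeff · 2) h
  simp [clearedQuadratic, -mul_eq_zero] at h0 h1 h2
  exact hε (by linear_combination h2 - h1 + h0)

lemma card_roots_toFinset_clearedQuadratic_le [DecidableEq F] (b c ε δ : F) :
    (clearedQuadratic b c ε δ).roots.toFinset.card ≤ 2 :=
  (Multiset.toFinset_card_le _).trans ((card_roots' _).trans natDegree_quadratic_le)

lemma isRoot_clearedQuadratic {b c x : F} {d : ℕ} (hx : (x + 1) ^ d - c * x ^ d = b) :
    (clearedQuadratic b c ((x + 1) ^ (d + 1)) (x ^ (d + 1))).IsRoot x := by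
  simp only [clearedQuadratic, IsRoot, eval_add, eval_mul, eval_pow, eval_C, eval_X]
  rw [pow_succ, pow_succ]
  linear_combination -(x * (x + 1)) * hx

lemma card_filter_solutions_zero_neg_one_le_one [DecidableEq F] {b c : F} {d : ℕ} (hd : d ≠ 0)
    (hc₁ : c ≠ 1) (hc₂ : c ≠ -1) :
    (({0, -1} : Finset F).filter fun x => (x + 1) ^ d - c * x ^ d = b).card ≤ 1 := by
  rw [Finset.filter_insert, Finset.filter_singleton]
  split_ifs with h₀ h₁ h₁
  · exfalso
    rw [zero_pow hd, mul_zero, sub_zero, zero_add, one_pow] at h₀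
    rw [neg_add_cancel, zero_pow hd, zero_sub, ← h₀] at h₁
    rcases neg_one_pow_eq_or F d with h | h <;> rw [h] at h₁
    · exact hc₂ (by linear_combination -h₁)
    · exact hc₁ (by linear_combination h₁)
  all_goals simp

lemma mem_biUnion_roots_clearedQuadratic [Fintype F] [DecidableEq F] {b c x : F} {d : ℕ}
    (hd : 2 * (d + 1) = Fintype.card F - 1) (hx₀ : x ≠ 0) (hx₁ : x + 1 ≠ 0)
    (hx : (x + 1) ^ d - c * x ^ d = b) :
    x ∈ (({1, -1} : Finset F) ×ˢ ({1, -1} : Finset F)).biUnion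
      fun s => (clearedQuadratic b c s.1 s.2).roots.toFinset := by
  have hε := FiniteField.pow_eq_one_or_eq_neg_one hx₁ hd
  have hδ := FiniteField.pow_eq_one_or_eq_neg_one hx₀ hd
  refine Finset.mem_biUnion.mpr ⟨((x + 1) ^ (d + 1), x ^ (d + 1)), ?_, ?_⟩
  · simpa only [Finset.mem_product, Finset.mem_insert, Finset.mem_singleton] using ⟨hε, hδ⟩
  · have hε₀ : (x + 1) ^ (d + 1) ≠ 0 := pow_ne_zero _ hx₁
    exact Multiset.mem_toFinset.mpr
      ((mem_roots (clearedQuadratic_ne_zero b c _ hε₀)).mpr (isRoot_clearedQuadratic hx))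

end

theorem stmt_18_general (F : Type*) [Field F] [Fintype F]
    (hodd : Odd (Fintype.card F))
    (d : ℕ) (hd : d = (Fintype.card F - 3) / 2) (hdpos : 0 < d) :
    ∀ c : F, c ≠ 1 → c ≠ -1 →
      ∀ b : F, {x : F | (x + 1) ^ d - c * x ^ d = b}.ncard ≤ 9 := by
  intro c hc1 hc2 b
  classical
  have h2d : 2 * (d + 1) = Fintype.card F - 1 := by obtain ⟨k, hk⟩ := hodd; omega
  set S := {x : F | (x + 1) ^ d - c * x ^ d = b}
  set ends := ({0, -1} : Finset F).filter fun x => (x + 1) ^ d - c * x ^ d = b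
  set signs : Finset F := {1, -1}
  set roots := (signs ×ˢ signs).biUnion fun s => (clearedQuadratic b c s.1 s.2).roots.toFinset
  have hsub : S ⊆ ↑(ends ∪ roots) := by
    intro x hx
    by_cases hx₀₁ : x = 0 ∨ x = -1
    · exact Finset.mem_union_left _ (Finset.mem_filter.mpr ⟨by simpa using hx₀₁, hx⟩)
    obtain ⟨hx₀, hx₁⟩ := not_or.mp hx₀₁
    exact Finset.mem_union_right _ (mem_biUnion_roots_clearedQuadratic h2d hx₀
      (fun h => hx₁ (eq_neg_of_add_eq_zero_left h)) hx)
  have hends : ends.card ≤ 1 := card_filter_solutions_zero_neg_one_le_one hdpos.ne' hc1 hc2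
  have hsigns : (signs ×ˢ signs).card ≤ 2 * 2 := by
    rw [Finset.card_product]; exact Nat.mul_le_mul Finset.card_le_two Finset.card_le_two
  have hroots : roots.card ≤ 2 * 2 * 2 :=
    (Finset.card_biUnion_le_card_mul _ _ 2 fun s _ =>
      card_roots_toFinset_clearedQuadratic_le b c s.1 s.2).trans (Nat.mul_le_mul_right 2 hsigns)
  calc S.ncard ≤ (ends ∪ roots).card :=
        (Set.ncard_le_ncard hsub (Finset.finite_toSet _)).trans_eq (Set.ncard_coe_finset _)
    _ ≤ 9 := (Finset.card_union_le _ _).trans (by omega)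

theorem stmt_18 (F : Type*) [Field F] [Fintype F] [DecidableEq F]
    (hodd : Odd (Fintype.card F)) (hq : 3 < Fintype.card F)
    (d : ℕ) (hd : d = (Fintype.card F - 3) / 2) (hdpos : 0 < d) :
    ∀ c : F, c ≠ 1 → c ≠ -1 →
      ∀ b : F, {x : F | (x + 1) ^ d - c * x ^ d = b}.ncard ≤ 9 :=
  stmt_18_general F hodd d hd hdpos
end

section
/- Let q be an odd prime power with q ≡ 3 (mod 4), q > 3, and d = (q-3)/2. Suppose 5 is a nonsquare in F_q. If 2 is a square in F_q, then the equation (x+1)^d + x^d = 4 has exactly one solution x ∈ F_q (namely x = -1/2); if 2 is a nonsquare, then (x+1)^d + x^d = -4 has exactly one solution. -/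
lemma key19 (F : Type*) [Field F] [Fintype F]
    (hq3 : Fintype.card F % 4 = 3) (hq : 3 < Fintype.card F)
    (d : ℕ) (hd : d = (Fintype.card F - 3) / 2)
    (h5 : ¬ IsSquare (5 : F)) (s : F) (hs : s * s = 1)
    (hsq : IsSquare (2 : F) ↔ s = 1) :
    {x : F | (x + 1) ^ d + x ^ d = 4 * s} = {-(1 / 2 : F)} := by
  set q := Fintype.card F with hqdef
  have hchar2 : ringChar F ≠ 2 := fun h => by
    have := FiniteField.even_card_of_char_two (F := F) h; omega
  have htwo : (2 : F) ≠ 0 := Ring.two_ne_zero hchar2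
  have hd1 : d + 1 = q / 2 := by omega
  have hd0 : d ≠ 0 := by omega
  have hdeven : Even d := by
    rcases Nat.even_or_odd d with h | h
    · exact h
    · exfalso; rcases h with ⟨k, hk⟩; omega
  have hq2odd : Odd (q / 2) := by
    rcases Nat.even_or_odd (q / 2) with h | h
    · exfalso; rcases h with ⟨k, hk⟩; omega
    · exact h
  have hscases : s = 1 ∨ s = -1 := by
    have h0 : (s - 1) * (s + 1) = 0 := by linear_combination hs
    rcases mul_eq_zero.mp h0 with h | h
    · exact Or.inl (by linear_combination h)
    · exact Or.inr (by linear_combination h)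
  -- 2 ^ (q/2) = s
  have h2pow : (2 : F) ^ (q / 2) = s := by
    rcases hscases with h1 | h1
    · rw [h1]; exact (FiniteField.isSquare_iff hchar2 htwo).mp (hsq.mpr h1)
    · rcases FiniteField.pow_dichotomy hchar2 htwo with h | h
      · exfalso
        have := hsq.mp ((FiniteField.isSquare_iff hchar2 htwo).mpr h)
        rw [h1] at this
        exact Ring.neg_one_ne_one_of_char_ne_two hchar2 this
      · rw [h, h1]
  have hinv2pow : ((2 : F)⁻¹) ^ (q / 2) = s := by
    rw [inv_pow, h2pow, inv_eq_of_mul_eq_one_left hs]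
  -- the contradiction from 4*s = 1
  have habs : (4 : F) * s = 1 → False := by
    intro h1
    rcases hscases with h | h
    · rw [h, mul_one] at h1
      have h3 : (3 : F) = 0 := by linear_combination h1
      have : (5 : F) = 2 := by linear_combination h3
      exact h5 (this ▸ hsq.mpr h)
    · apply h5
      refine ⟨0, ?_⟩
      rw [h] at h1
      linear_combination -h1
  ext x
  simp only [Set.mem_setOf_eq, Set.mem_singleton_iff]
  constructor
  · intro hx
    by_cases hx0 : x = 0
    · exfalso
      rw [hx0, zero_pow hd0, zero_add, add_zero, one_pow] at hx
      exact habs hx.symm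
    by_cases hx1 : x + 1 = 0
    · exfalso
      have hxm : x = -1 := by linear_combination hx1
      rw [hx1, hxm, zero_pow hd0, Even.neg_one_pow hdeven, zero_add] at hx
      exact habs hx.symm
    -- main case
    set u := x ^ (q / 2) with hu
    set v := (x + 1) ^ (q / 2) with hv
    have hud : x ^ d * x = u := by rw [hu, ← pow_succ, hd1]
    have hvd : (x + 1) ^ d * (x + 1) = v := by rw [hv, ← pow_succ, hd1]
    have hucases := FiniteField.pow_dichotomy hchar2 hx0
    have hvcases := FiniteField.pow_dichotomy hchar2 hx1
    rw [← hu] at hucases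
    rw [← hv] at hvcases
    -- polynomial form of the equation
    have hx' : v * x + u * (x + 1) = 4 * s * (x * (x + 1)) := by
      have hxi : x * x⁻¹ = 1 := mul_inv_cancel₀ hx0
      have hx1i : (x + 1) * (x + 1)⁻¹ = 1 := mul_inv_cancel₀ hx1
      have hxd : x ^ d = u * x⁻¹ := by
        field_simp
        linear_combination hud
      have hvdd : (x + 1) ^ d = v * (x + 1)⁻¹ := by
        field_simp
        linear_combination hvd
      rw [hxd, hvdd] at hx
      field_simp at hx
      linear_combination hx
    have hprod : (x * (x + 1)) ^ (q / 2) = u * v := by rw [mul_pow]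
    rcases hucases with hu1 | hu1 <;> rcases hvcases with hv1 | hv1 <;>
      rw [hu1, hv1] at hx' hprod <;> rcases hscases with hs1 | hs1 <;> rw [hs1] at hx'
    -- u = 1, v = 1, s = 1
    · exact absurd ⟨4 * x + 1, by linear_combination 4 * hx'⟩ h5
    -- u = 1, v = 1, s = -1
    · exact absurd ⟨4 * x + 3, by linear_combination -4 * hx'⟩ h5
    -- u = 1, v = -1, s = 1 : x(x+1) = 1/4, contradiction with prod = -1
    · exfalso
      have hxx : x * (x + 1) = (2 : F)⁻¹ * (2 : F)⁻¹ := by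
        field_simp
        linear_combination -hx'
      rw [hxx, mul_pow, hinv2pow, hs1] at hprod
      exact Ring.neg_one_ne_one_of_char_ne_two hchar2 (by linear_combination -hprod)
    -- u = 1, v = -1, s = -1 : x(x+1) = -1/4, x = -1/2
    · have h0 : (2 * x + 1) * (2 * x + 1) = 0 := by linear_combination hx'
      rcases mul_eq_zero.mp h0 with h | h
      all_goals
        have h2x : (2 : F) * x = -1 := by linear_combination h
        field_simp
        linear_combination h2x
    -- u = -1, v = 1, s = 1 : x(x+1) = -1/4, x = -1/2
    · have h0 : (2 * x + 1) * (2 * x + 1) = 0 := by linear_combination -hx'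
      rcases mul_eq_zero.mp h0 with h | h
      all_goals
        have h2x : (2 : F) * x = -1 := by linear_combination h
        field_simp
        linear_combination h2x
    -- u = -1, v = 1, s = -1 : x(x+1) = 1/4, contradiction
    · exfalso
      have hxx : x * (x + 1) = (2 : F)⁻¹ * (2 : F)⁻¹ := by
        field_simp
        linear_combination hx'
      rw [hxx, mul_pow, hinv2pow, hs1] at hprod
      exact Ring.neg_one_ne_one_of_char_ne_two hchar2 (by linear_combination -hprod)
    -- u = -1, v = -1, s = 1
    · exact absurd ⟨4 * x + 3, by linear_combination 4 * hx'⟩ h5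
    -- u = -1, v = -1, s = -1
    · exact absurd ⟨4 * x + 1, by linear_combination -4 * hx'⟩ h5
  · rintro rfl
    have he : (-(1 / 2 : F)) + 1 = (2 : F)⁻¹ := by
      field_simp
      norm_num
    have hm : (-(1 / 2 : F)) = -((2 : F)⁻¹) := by rw [one_div]
    have hp1 : ((2 : F)⁻¹) ^ d * ((2 : F)⁻¹) = s := by
      rw [← pow_succ, hd1, hinv2pow]
    have hp2 : (-((2 : F)⁻¹)) ^ d * (-((2 : F)⁻¹)) = -s := by
      rw [← pow_succ, hd1, neg_pow, Odd.neg_one_pow hq2odd, hinv2pow, neg_one_mul]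
    rw [he, hm]
    have hinv : (2 : F)⁻¹ ≠ 0 := inv_ne_zero htwo
    have e1 : ((2 : F)⁻¹) ^ d = 2 * s := by
      field_simp at hp1 ⊢
      linear_combination hp1
    have e2 : (-((2 : F)⁻¹)) ^ d = 2 * s := by
      rw [Even.neg_pow hdeven, e1]
    rw [e1, e2]
    ring

theorem stmt_19 (F : Type*) [Field F] [Fintype F] [DecidableEq F]
    (hq3 : Fintype.card F % 4 = 3) (hq : 3 < Fintype.card F)
    (d : ℕ) (hd : d = (Fintype.card F - 3) / 2)
    (h5 : ¬ IsSquare (5 : F)) :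
    (IsSquare (2 : F) → {x : F | (x + 1) ^ d + x ^ d = 4} = {-(1 / 2 : F)}) ∧
    (¬ IsSquare (2 : F) → {x : F | (x + 1) ^ d + x ^ d = -4}.ncard = 1) := by
  have hchar2 : ringChar F ≠ 2 := fun h => by
    have := FiniteField.even_card_of_char_two (F := F) h; omega
  constructor
  · intro h2
    have := key19 F hq3 hq d hd h5 1 (by ring) (iff_of_true h2 rfl)
    simpa using this
  · intro h2
    have := key19 F hq3 hq d hd h5 (-1) (by ring)
      (iff_of_false h2 (Ring.neg_one_ne_one_of_char_ne_two hchar2))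
    have h4 : (4 : F) * (-1) = -4 := by ring
    rw [h4] at this
    rw [this]
    exact Set.ncard_singleton _
end
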